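/- arXiv:2601.08777 — 7 statements merged into one kernel-verified Lean document; each statement's English description precedes it below -/
import Mathlib

section
/- (Theorem 3.1 for populations of rankings: possibility of (k, k/(k+1))-robust alignment with a multi-output policy.) Let D be a probability distribution over linear orders on a finite nonempty set Y and let k ≥ 1. Then there exists a probability distribution π over size-k multisets of Y such that for every response y ∈ Y, Pr_{S~π, ≻~D}[max(S) ≽ y] ≥ k/(k+1). -/
open Finset

section minimax

variable {A B : Type} [Fintype A] [Fintype B] [Nonempty B]

/-- Finite minimax via Hahn-Banach separation: if every mixed column strategy is
beaten (to value `c`) by some pure row, then some mixed row guarantees `c`. -/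
lemma minimax_exists (M : A → B → ℝ) (c : ℝ)
    (H : ∀ q : B → ℝ, (∀ b, 0 ≤ q b) → ∑ b, q b = 1 →
      ∃ a, c ≤ ∑ b, q b * M a b) :
    ∃ π : A → ℝ, (∀ a, 0 ≤ π a) ∧ (∑ a, π a = 1) ∧
      ∀ b, c ≤ ∑ a, π a * M a b := by
  classical
  set s : Set (A → ℝ) := Set.pi Set.univ (fun _ : A => Set.Iio (0:ℝ)) with hs_def
  set t : Set (A → ℝ) := {w | ∃ q : B → ℝ, (∀ b, 0 ≤ q b) ∧ (∑ b, q b = 1) ∧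
      w = fun a => ∑ b, q b * (M a b - c)} with ht_def
  have hs₁ : Convex ℝ s := convex_pi (fun _ _ => convex_Iio 0)
  have hs₂ : IsOpen s := isOpen_set_pi Set.finite_univ (fun _ _ => isOpen_Iio)
  have hsmem : ∀ w : A → ℝ, (∀ a, w a < 0) → w ∈ s := by
    intro w hw; rw [hs_def]; intro a _; exact hw a
  have ht₁ : Convex ℝ t := by
    rintro w₁ ⟨q₁, hq₁0, hq₁1, rfl⟩ w₂ ⟨q₂, hq₂0, hq₂1, rfl⟩ u v hu hv huv
    refine ⟨fun b => u * q₁ b + v * q₂ b, fun b => add_nonneg (mul_nonneg hu (hq₁0 b)) (mul_nonneg hv (hq₂0 b)), ?_, ?_⟩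
    · simp [Finset.sum_add_distrib, ← Finset.mul_sum, hq₁1, hq₂1, huv]
    · funext a
      simp only [Pi.add_apply, Pi.smul_apply, smul_eq_mul, Finset.mul_sum,
        ← Finset.sum_add_distrib]
      exact Finset.sum_congr rfl fun b _ => by ring
  have key : ∀ (q : B → ℝ), (∀ b, 0 ≤ q b) → (∑ b, q b = 1) → ∀ a : A,
      (∑ b, q b * (M a b - c)) = (∑ b, q b * M a b) - c := by
    intro q hq0 hq1 a
    simp [mul_sub, Finset.sum_sub_distrib, ← Finset.sum_mul, hq1]
  have hdisj : Disjoint s t := by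
    rw [Set.disjoint_left]
    rintro w hws ⟨q, hq0, hq1, rfl⟩
    obtain ⟨a, ha⟩ := H q hq0 hq1
    have h2 : (0:ℝ) ≤ ∑ b, q b * (M a b - c) := by rw [key q hq0 hq1 a]; linarith
    have h3 := hws a (Set.mem_univ a)
    simp only [Set.mem_Iio] at h3
    exact absurd h2 (not_le.mpr h3)
  obtain ⟨f, u, hfs, hft⟩ := geometric_hahn_banach_open hs₁ hs₂ ht₁ hdisj
  set φ : A → ℝ := fun a => f (Pi.single a (1:ℝ)) with hφ_def
  have flin : ∀ w : A → ℝ, f w = ∑ a, w a * φ a := by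
    intro w
    have hw : w = ∑ a, w a • (Pi.single a (1:ℝ) : A → ℝ) := by
      funext x
      simp [Finset.sum_apply, Pi.single_apply, mul_ite, Finset.sum_ite_eq']
    conv_lhs => rw [hw]
    rw [map_sum]
    exact Finset.sum_congr rfl fun a _ => by rw [map_smul]; simp [hφ_def]
  have hsneg : ∀ w : A → ℝ, (∀ a, w a < 0) → f w < u := fun w hw => hfs w (hsmem w hw)
  set Sφ : ℝ := ∑ a, φ a with hSφ_def
  have hconst : ∀ η : ℝ, 0 < η → -η * Sφ < u := by
    intro η hη
    have h := hsneg (fun _ => -η) (fun a => show -η < 0 by linarith)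
    rw [flin] at h
    calc -η * Sφ = ∑ a : A, (fun _ : A => -η) a * φ a := by
          rw [hSφ_def, Finset.mul_sum]
      _ < u := h
  have hu0 : 0 ≤ u := by
    by_contra hu
    push_neg at hu
    have h1 := hconst 1 one_pos
    have hF : 0 < Sφ := by nlinarith
    have h2 := hconst (-u / (2 * Sφ)) (div_pos (by linarith) (by positivity))
    have h3 : -(-u / (2 * Sφ)) * Sφ = u / 2 := by field_simp
    rw [h3] at h2
    linarith
  have hφ0 : ∀ a, 0 ≤ φ a := by
    intro a
    by_contra hφa
    push_neg at hφa
    set tv : ℝ := (|u| + |Sφ| + 1) / (-φ a) with htv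
    have htv0 : 0 < tv := by
      apply div_pos (by positivity) (by linarith)
    set w : A → ℝ := fun a' => -tv * (if a' = a then 1 else 0) - 1 with hw_def
    have hws : ∀ a', w a' < 0 := by
      intro a'
      rw [hw_def]
      dsimp only
      split <;> nlinarith
    have h := hsneg w hws
    rw [flin] at h
    have hcomp : ∑ a', w a' * φ a' = -tv * φ a - Sφ := by
      have e1 : ∀ a' : A, w a' * φ a'
          = -tv * ((if a' = a then φ a' else 0)) - φ a' := by
        intro a'
        rw [hw_def]
        dsimp only
        split <;> ring
      rw [Finset.sum_congr rfl (fun a' _ => e1 a'), Finset.sum_sub_distrib,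
        ← Finset.mul_sum, Finset.sum_ite_eq' Finset.univ a φ]
      simp [hSφ_def]
    rw [hcomp] at h
    have htveq : tv * (-φ a) = |u| + |Sφ| + 1 := by
      rw [htv]
      exact div_mul_cancel₀ _ (by linarith : -φ a ≠ 0)
    have h5 : u ≤ |u| := le_abs_self u
    have h6 : Sφ ≤ |Sφ| := le_abs_self Sφ
    nlinarith
  have htne : ∃ w, w ∈ t := by
    obtain ⟨b₀⟩ := (inferInstance : Nonempty B)
    exact ⟨_, ⟨fun b => if b = b₀ then 1 else 0,
      fun b => by dsimp only; split <;> norm_num, by simp, rfl⟩⟩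
  have hFsum : 0 < ∑ a, φ a := by
    rcases lt_or_eq_of_le (Finset.sum_nonneg (fun a _ => hφ0 a)) with h | h
    · exact h
    · exfalso
      have hzero : ∀ a, φ a = 0 := by
        intro a
        have := (Finset.sum_eq_zero_iff_of_nonneg (fun a _ => hφ0 a)).mp h.symm
        exact this a (Finset.mem_univ a)
      obtain ⟨w, hw⟩ := htne
      have h1 : u ≤ f w := hft w hw
      have h2 : f w = 0 := by rw [flin]; simp [hzero]
      rcases isEmpty_or_nonempty A with hA | hA
      · -- A empty: f of anything is 0, and s contains everything vacuously
        have h3 := hsneg (fun _ => -1) (fun a => (IsEmpty.false a).elim)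
        have h4 : f (fun _ => (-1:ℝ)) = 0 := by rw [flin]; simp
        linarith
      · have h3 := hsneg (fun _ => -1) (fun a => by norm_num)
        have h4 : f (fun _ => (-1:ℝ)) = ∑ a, (-1) * φ a := flin _
        simp [hzero] at h4
        linarith
  refine ⟨fun a => φ a / (∑ a', φ a'), fun a => div_nonneg (hφ0 a) hFsum.le, ?_, ?_⟩
  · rw [← Finset.sum_div]; field_simp
  · intro b
    set q : B → ℝ := fun b' => if b' = b then 1 else 0 with hq_def
    have h1 : u ≤ f (fun a => ∑ b', q b' * (M a b' - c)) :=
      hft _ ⟨q, fun b' => by by_cases hb : b' = b <;> simp [hq_def, hb], by simp [hq_def], rfl⟩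
    have h2 : (fun a => ∑ b', q b' * (M a b' - c)) = fun a => M a b - c := by
      funext a; simp [hq_def, Finset.sum_ite_eq']
    rw [h2, flin] at h1
    have h3 : (0:ℝ) ≤ ∑ a, (M a b - c) * φ a := le_trans hu0 h1
    have h4 : ∑ a, (M a b - c) * φ a = (∑ a, φ a * M a b) - c * ∑ a, φ a := by
      rw [Finset.mul_sum, ← Finset.sum_sub_distrib]
      exact Finset.sum_congr rfl fun a _ => by ring
    rw [h4] at h3
    have h5 : ∑ a, φ a / (∑ a', φ a') * M a b = (∑ a, φ a * M a b) / (∑ a', φ a') := by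
      rw [Finset.sum_div]
      exact Finset.sum_congr rfl fun a _ => by ring
    rw [h5, le_div_iff₀ hFsum]
    linarith

end minimax

section core

variable {Y : Type} [Fintype Y] [DecidableEq Y] [Nonempty Y]

/-- The "win probability" matrix: probability over `r ~ D` that the best element of `S`
(by rank) is at least as good as `y`. -/
noncomputable def BMmat (D : (Y ≃ Fin (Fintype.card Y)) → ℝ) {k : ℕ}
    (S : Sym Y k) (y : Y) : ℝ :=
  ∑ r : Y ≃ Fin (Fintype.card Y),
    D r * (if (r y).val ≤ ((S : Multiset Y).map fun z => (r z).val).sup then (1:ℝ) else 0)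

/-- The size-`k` multiset collecting the values of `z : Fin k → Y`. -/
def SymOf {k : ℕ} (z : Fin k → Y) : Sym Y k :=
  ⟨Finset.univ.val.map z, by simp⟩

lemma core_lemma (D : (Y ≃ Fin (Fintype.card Y)) → ℝ)
    (hD0 : ∀ r, 0 ≤ D r) (hD1 : ∑ r, D r = 1) (k : ℕ)
    (q : Y → ℝ) (hq0 : ∀ y, 0 ≤ q y) (hq1 : ∑ y, q y = 1) :
    ∃ S : Sym Y k, (k : ℝ) / ((k : ℝ) + 1) ≤ ∑ y, q y * BMmat D S y := by
  classical
  -- the sub-multiset omitting coordinate i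
  set msub : (Fin (k+1) → Y) → Fin (k+1) → Multiset Y :=
    fun z i => (Finset.univ.erase i).val.map z with hmsub_def
  set ind : (Y ≃ Fin (Fintype.card Y)) → Multiset Y → Y → ℝ :=
    fun r m y => if (r y).val ≤ (m.map fun w => (r w).val).sup then (1:ℝ) else 0
    with hind_def
  set W : (Fin (k+1) → Y) → ℝ := fun z => ∏ j, q (z j) with hW_def
  have hW0 : ∀ z, 0 ≤ W z := fun z => Finset.prod_nonneg fun j _ => hq0 (z j)
  have hWsum : ∑ z : Fin (k+1) → Y, W z = 1 := by
    rw [hW_def]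
    rw [← Fintype.piFinset_univ, Finset.sum_prod_piFinset]
    simp [hq1]
  -- pointwise: at most one coordinate is the unique strict maximum
  have hind01 : ∀ r m y, ind r m y = 0 ∨ ind r m y = 1 := by
    intro r m y
    simp only [hind_def]
    split
    · right; rfl
    · left; rfl
  have hind0 : ∀ r m y, 0 ≤ ind r m y := by
    intro r m y
    rcases hind01 r m y with h | h <;> rw [h] <;> norm_num
  have hpoint : ∀ (z : Fin (k+1) → Y) (r : Y ≃ Fin (Fintype.card Y)),
      (k : ℝ) ≤ ∑ i, ind r (msub z i) (z i) := by
    intro z r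
    have hmem : ∀ (i j : Fin (k+1)), i ≠ j →
        (r (z i)).val ∈ (msub z j).map fun w => (r w).val := by
      intro i j hij
      rw [hmsub_def]
      dsimp only
      rw [Multiset.map_map]
      apply Multiset.mem_map_of_mem
      rw [Finset.mem_val, Finset.mem_erase]
      exact ⟨hij, Finset.mem_univ i⟩
    have hbadlt : ∀ i, ind r (msub z i) (z i) ≠ 1 →
        ((msub z i).map fun w => (r w).val).sup < (r (z i)).val := by
      intro i hi
      rw [hind_def] at hi
      dsimp only at hi
      by_contra hc
      rw [not_lt] at hc
      exact hi (if_pos hc)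
    by_cases hall : ∀ i, ind r (msub z i) (z i) = 1
    · rw [Finset.sum_congr rfl (fun i _ => hall i)]
      rw [Finset.sum_const, Finset.card_univ, Fintype.card_fin, nsmul_eq_mul]
      push_cast
      linarith
    · push_neg at hall
      obtain ⟨i₀, hi₀⟩ := hall
      have hgood : ∀ i, i ≠ i₀ → ind r (msub z i) (z i) = 1 := by
        intro i hi
        by_contra hbad
        have h1 : (r (z i₀)).val < (r (z i)).val :=
          lt_of_le_of_lt (Multiset.le_sup (hmem i₀ i hi.symm)) (hbadlt i hbad)
        have h2 : (r (z i)).val < (r (z i₀)).val :=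
          lt_of_le_of_lt (Multiset.le_sup (hmem i i₀ hi)) (hbadlt i₀ hi₀)
        exact absurd h1 (not_lt.mpr h2.le)
      calc (k : ℝ) = ∑ i ∈ Finset.univ.erase i₀, ind r (msub z i) (z i) := by
            rw [Finset.sum_congr rfl (fun i hi => hgood i (Finset.ne_of_mem_erase hi))]
            rw [Finset.sum_const, Finset.card_erase_of_mem (Finset.mem_univ i₀),
              Finset.card_univ, Fintype.card_fin, nsmul_eq_mul]
            simp
        _ ≤ ∑ i, ind r (msub z i) (z i) :=
            Finset.sum_le_sum_of_subset_of_nonneg (Finset.subset_univ _)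
              (fun i _ _ => hind0 r (msub z i) (z i))
  -- the quantity T i
  set T : Fin (k+1) → ℝ :=
    fun i => ∑ z : Fin (k+1) → Y, W z * ∑ r : Y ≃ Fin (Fintype.card Y),
      D r * ind r (msub z i) (z i)
    with hT_def
  -- symmetry: T i = T 0
  have hTsym : ∀ i, T 0 = T i := by
    intro i
    set σ : Equiv.Perm (Fin (k+1)) := Equiv.swap 0 i with hσ_def
    have hσi : σ i = 0 := Equiv.swap_apply_right 0 i
    rw [hT_def]
    dsimp only
    apply Fintype.sum_equiv (Equiv.arrowCongr σ (Equiv.refl Y)).symm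
    intro z
    have hz : (Equiv.arrowCongr σ (Equiv.refl Y)).symm z = z ∘ σ := by
      funext j; simp [Equiv.arrowCongr]
    rw [hz]
    have hWz : W (z ∘ σ) = W z := by
      rw [hW_def]
      exact Equiv.prod_comp σ (fun j => q (z j))
    have hmz : msub (z ∘ σ) i = msub z 0 := by
      rw [hmsub_def]
      dsimp only
      have h1 : (Finset.univ.erase i).val.map (⇑σ)
          = (Finset.univ.erase (0 : Fin (k+1))).val := by
        rw [← Equiv.coe_toEmbedding, ← Finset.map_val, Finset.map_erase,
          Finset.map_univ_equiv]
        simp only [Equiv.coe_toEmbedding, hσi]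
      calc (Finset.univ.erase i).val.map (z ∘ ⇑σ)
          = ((Finset.univ.erase i).val.map (⇑σ)).map z := by rw [Multiset.map_map]
        _ = (Finset.univ.erase (0:Fin (k+1))).val.map z := by rw [h1]
    have hzi : (z ∘ σ) i = z 0 := by simp [hσi]
    rw [hWz, hmz, hzi]
  -- sum over i: at least k
  have hTsum : (k : ℝ) ≤ ∑ i, T i := by
    have h1 : ∑ i, T i
        = ∑ z : Fin (k+1) → Y, W z * ∑ r : Y ≃ Fin (Fintype.card Y),
            D r * ∑ i, ind r (msub z i) (z i) := by
      rw [hT_def]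
      rw [Finset.sum_comm]
      apply Finset.sum_congr rfl
      intro z _
      rw [← Finset.mul_sum]
      congr 1
      rw [Finset.sum_comm]
      apply Finset.sum_congr rfl
      intro r _
      rw [← Finset.mul_sum]
    rw [h1]
    have h2 : ∀ z : Fin (k+1) → Y,
        W z * (k : ℝ) ≤ W z * ∑ r : Y ≃ Fin (Fintype.card Y),
          D r * ∑ i, ind r (msub z i) (z i) := by
      intro z
      apply mul_le_mul_of_nonneg_left _ (hW0 z)
      calc (k : ℝ) = ∑ r : Y ≃ Fin (Fintype.card Y), D r * (k : ℝ) := by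
            rw [← Finset.sum_mul, hD1, one_mul]
        _ ≤ ∑ r : Y ≃ Fin (Fintype.card Y), D r * ∑ i, ind r (msub z i) (z i) :=
            Finset.sum_le_sum fun r _ => mul_le_mul_of_nonneg_left (hpoint z r) (hD0 r)
    calc (k : ℝ) = ∑ z : Fin (k+1) → Y, W z * (k : ℝ) := by
          rw [← Finset.sum_mul, hWsum, one_mul]
      _ ≤ _ := Finset.sum_le_sum fun z _ => h2 z
  -- hence T 0 ≥ k/(k+1)
  have hT0 : (k : ℝ) / ((k : ℝ) + 1) ≤ T 0 := by
    have h1 : ∑ i, T i = ((k : ℝ) + 1) * T 0 := by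
      rw [Finset.sum_congr rfl (fun i _ => (hTsym i).symm)]
      rw [Finset.sum_const, Finset.card_univ, Fintype.card_fin, nsmul_eq_mul]
      push_cast
      ring
    rw [h1] at hTsum
    rw [div_le_iff₀ (by positivity)]
    linarith [hTsum]
  -- decompose T 0 over (first coordinate, rest)
  set e : Y × (Fin k → Y) ≃ (Fin (k+1) → Y) :=
    { toFun := fun p => Fin.cons p.1 p.2
      invFun := fun z => (z 0, Fin.tail z)
      left_inv := fun p => by simp [Fin.tail_cons]
      right_inv := fun z => by simp [Fin.cons_self_tail] } with he_def
  have hdecomp : T 0 = ∑ z' : Fin k → Y, (∏ j, q (z' j)) *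
      ∑ y, q y * BMmat D (SymOf z') y := by
    rw [hT_def]
    dsimp only
    rw [← Equiv.sum_comp e
      (fun z => W z * ∑ r : Y ≃ Fin (Fintype.card Y), D r * ind r (msub z 0) (z 0))]
    rw [Fintype.sum_prod_type, Finset.sum_comm]
    apply Finset.sum_congr rfl
    intro z' _
    rw [Finset.mul_sum]
    apply Finset.sum_congr rfl
    intro y _
    have hcons : e (y, z') = Fin.cons y z' := rfl
    rw [hcons]
    have hWc : W (Fin.cons y z') = q y * ∏ j, q (z' j) := by
      rw [hW_def]
      dsimp only
      rw [Fin.prod_univ_succ]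
      simp [Fin.cons_zero, Fin.cons_succ]
    have hm0 : msub (Fin.cons y z') 0 = (SymOf z' : Multiset Y) := by
      rw [hmsub_def]
      dsimp only
      have h1 : (Finset.univ.erase (0:Fin (k+1)))
          = Finset.univ.map ⟨Fin.succ, Fin.succ_injective _⟩ := by
        rw [Fin.univ_succ, Finset.erase_cons]
      rw [h1, Finset.map_val, Multiset.map_map]
      show Finset.univ.val.map ((Fin.cons y z') ∘ Fin.succ) = Finset.univ.val.map z'
      simp [Function.comp, Fin.cons_succ]
    have hz0 : (Fin.cons y z' : Fin (k+1) → Y) 0 = y := by simp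
    rw [hWc, hm0, hz0]
    simp only [BMmat, hind_def]
    rw [Finset.mul_sum, Finset.mul_sum, Finset.mul_sum]
    apply Finset.sum_congr rfl
    intro r _
    ring
  -- choose the best z'
  obtain ⟨z₀, _, hz₀⟩ := Finset.exists_max_image (Finset.univ : Finset (Fin k → Y))
    (fun z' => ∑ y, q y * BMmat D (SymOf z') y)
    ⟨fun _ => Classical.arbitrary Y, Finset.mem_univ _⟩
  refine ⟨SymOf z₀, ?_⟩
  have hW'sum : ∑ z' : Fin k → Y, (∏ j, q (z' j)) = 1 := by
    rw [← Fintype.piFinset_univ, Finset.sum_prod_piFinset]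
    simp [hq1]
  calc (k : ℝ) / ((k : ℝ) + 1) ≤ T 0 := hT0
    _ = ∑ z' : Fin k → Y, (∏ j, q (z' j)) * ∑ y, q y * BMmat D (SymOf z') y := hdecomp
    _ ≤ ∑ z' : Fin k → Y, (∏ j, q (z' j)) * ∑ y, q y * BMmat D (SymOf z₀) y := by
        apply Finset.sum_le_sum
        intro z' _
        exact mul_le_mul_of_nonneg_left (hz₀ z' (Finset.mem_univ z'))
          (Finset.prod_nonneg fun j _ => hq0 (z' j))
    _ = ∑ y, q y * BMmat D (SymOf z₀) y := by
        rw [← Finset.sum_mul, hW'sum, one_mul]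

end core

/-- Theorem 3.1, populations of rankings: possibility of
`(k, k/(k+1))`-robust alignment with a multi-output policy.  `D` is a probability
distribution over linear orders on a finite nonempty `Y` (encoded as equivalences
`r : Y ≃ Fin (Fintype.card Y)`; `max(S) ≽ y` iff `(r y).val ≤ sup of ranks of S`),
and `k ≥ 1`.  There exists a probability distribution `π` over size-`k` multisets of
`Y` (elements of `Sym Y k`) such that for every `y ∈ Y`,
`Pr_{S~π, r~D}[max(S) ≽ y] ≥ k/(k+1)`. -/
theorem stmt_5 (Y : Type) [Fintype Y] [DecidableEq Y] [Nonempty Y]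
    (D : (Y ≃ Fin (Fintype.card Y)) → ℝ)
    (hD0 : ∀ r, 0 ≤ D r) (hD1 : ∑ r, D r = 1)
    (k : ℕ) (hk : 1 ≤ k) :
    ∃ π : Sym Y k → ℝ, (∀ S, 0 ≤ π S) ∧ (∑ S, π S = 1) ∧
      ∀ y : Y,
        ∑ S : Sym Y k, ∑ r : Y ≃ Fin (Fintype.card Y),
            π S * D r *
              (if (r y).val ≤ (((S : Multiset Y)).map fun z => (r z).val).sup
               then (1 : ℝ) else 0)
          ≥ (k : ℝ) / ((k : ℝ) + 1) := by
  classical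
  obtain ⟨π, hπ0, hπ1, hπ⟩ := minimax_exists (A := Sym Y k) (B := Y)
    (fun S y => BMmat D S y) ((k : ℝ) / ((k : ℝ) + 1))
    (fun q hq0 hq1 => core_lemma D hD0 hD1 k q hq0 hq1)
  refine ⟨π, hπ0, hπ1, ?_⟩
  intro y
  rw [ge_iff_le]
  calc (k : ℝ) / ((k : ℝ) + 1) ≤ ∑ S, π S * BMmat D S y := hπ y
    _ = ∑ S : Sym Y k, ∑ r : Y ≃ Fin (Fintype.card Y),
          π S * D r *
            (if (r y).val ≤ (((S : Multiset Y)).map fun z => (r z).val).sup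
             then (1 : ℝ) else 0) := by
        apply Finset.sum_congr rfl
        intro S _
        rw [BMmat, Finset.mul_sum]
        apply Finset.sum_congr rfl
        intro r _
        ring
end

section
/- (Theorem 3.1 for mixtures of Plackett–Luce preferences.) Let Y be a finite nonempty set, let w_1, …, w_n : Y → ℝ_{>0} be positive weight functions, let D be a probability distribution over {1, …, n}, and let k ≥ 1. Then there exists a probability distribution π over size-k multisets of Y such that for every response y ∈ Y, E_{i~D} E_{S~π}[ w_i(S) / (w_i(S) + w_i(y)) ] ≥ k/(k+1). -/
open Finset

set_option linter.unusedSectionVars false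
set_option maxHeartbeats 2000000

private def symOf {Y : Type} [Fintype Y] (k : ℕ) (v : Fin k → Y) : Sym Y k :=
  ⟨Multiset.map v Finset.univ.val, by simp⟩

private lemma symOf_map_sum {Y : Type} [Fintype Y] (k : ℕ) (v : Fin k → Y) (g : Y → ℝ) :
    (((symOf k v : Sym Y k) : Multiset Y).map g).sum = ∑ j, g (v j) := by
  simp [symOf, Multiset.map_map]
  rw [List.sum_ofFn]
  rfl

private lemma sum_prod_eq_one {Y : Type} [Fintype Y] (k : ℕ) (μ : Y → ℝ)
    (hμ1 : ∑ y, μ y = 1) :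
    ∑ v : Fin k → Y, ∏ j, μ (v j) = 1 := by
  rw [← Fintype.piFinset_univ, ← Finset.prod_univ_sum]
  simp [hμ1]

private lemma sum_push {Y : Type} [Fintype Y] [DecidableEq Y] (k : ℕ) (μ : Y → ℝ)
    (h : Sym Y k → ℝ) :
    ∑ S : Sym Y k, (∑ v : Fin k → Y, if symOf k v = S then ∏ j, μ (v j) else 0) * h S
      = ∑ v : Fin k → Y, (∏ j, μ (v j)) * h (symOf k v) := by
  simp only [Finset.sum_mul, ite_mul, zero_mul]
  rw [Finset.sum_comm]
  simp [Finset.sum_ite_eq]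

private lemma symm_sum {Y : Type} [Fintype Y] [DecidableEq Y] (k : ℕ) (g : Y → ℝ)
    (μ : Y → ℝ) (m : Fin (k+1)) :
    ∑ u : Fin (k+1) → Y, (∏ j, μ (u j)) * (g (u m) / ∑ j, g (u j))
      = ∑ u : Fin (k+1) → Y, (∏ j, μ (u j)) * (g (u 0) / ∑ j, g (u j)) := by
  apply Fintype.sum_equiv (Equiv.arrowCongr (Equiv.swap (0 : Fin (k+1)) m) (Equiv.refl Y))
  intro u
  have h1 : ∀ j, (Equiv.arrowCongr (Equiv.swap (0 : Fin (k+1)) m) (Equiv.refl Y)) u j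
      = u ((Equiv.swap (0 : Fin (k+1)) m).symm j) := fun j => rfl
  simp only [h1, Equiv.symm_swap]
  rw [Equiv.prod_comp (Equiv.swap (0 : Fin (k+1)) m) (fun j => μ (u j)),
      Equiv.sum_comp (Equiv.swap (0 : Fin (k+1)) m) (fun j => g (u j)),
      Equiv.swap_apply_left]

private lemma key_identity {Y : Type} [Fintype Y] [DecidableEq Y] (k : ℕ) (g : Y → ℝ)
    (hg : ∀ y, 0 < g y) (μ : Y → ℝ) (hμ1 : ∑ y, μ y = 1) :
    ∑ v : Fin k → Y, ∑ y : Y, (∏ j, μ (v j)) * μ y *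
      ((∑ j, g (v j)) / ((∑ j, g (v j)) + g y)) = (k : ℝ) / ((k : ℝ) + 1) := by
  have hT : ∀ u : Fin (k+1) → Y, 0 < ∑ j, g (u j) :=
    fun u => Finset.sum_pos (fun j _ => hg _) univ_nonempty
  have hPsum := sum_prod_eq_one (k+1) μ hμ1
  have hk1 : ((k:ℝ)+1) ≠ 0 := by positivity
  have hF0 : ∑ u : Fin (k+1) → Y, (∏ j, μ (u j)) * (g (u 0) / ∑ j, g (u j))
      = 1/((k:ℝ)+1) := by
    have h3 : ∑ m : Fin (k+1), ∑ u : Fin (k+1) → Y,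
        (∏ j, μ (u j)) * (g (u m) / ∑ j, g (u j)) = 1 := by
      rw [Finset.sum_comm]
      have heach : ∀ u : Fin (k+1) → Y,
          ∑ m : Fin (k+1), (∏ j, μ (u j)) * (g (u m) / ∑ j, g (u j)) = ∏ j, μ (u j) := by
        intro u
        rw [← Finset.mul_sum, ← Finset.sum_div, div_self (hT u).ne', mul_one]
      rw [Finset.sum_congr rfl (fun u _ => heach u), hPsum]
    rw [Finset.sum_congr rfl (fun m _ => symm_sum k g μ m), Finset.sum_const, card_univ,
        Fintype.card_fin, nsmul_eq_mul] at h3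
    push_cast at h3
    rw [eq_div_iff hk1, mul_comm]
    exact h3
  have hre : (∑ v : Fin k → Y, ∑ y : Y, (∏ j, μ (v j)) * μ y *
        ((∑ j, g (v j)) / ((∑ j, g (v j)) + g y)))
      = ∑ u : Fin (k+1) → Y, (∏ j, μ (u j)) * ((∑ j : Fin k, g (u j.succ)) / ∑ j, g (u j)) := by
    rw [Finset.sum_comm, ← Fintype.sum_prod_type']
    apply Fintype.sum_equiv (Fin.consEquiv (fun _ => Y))
    intro p
    obtain ⟨y, v⟩ := p
    simp only [Fin.consEquiv, Equiv.coe_fn_mk, Fin.prod_univ_succ, Fin.sum_univ_succ,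
      Fin.cons_zero, Fin.cons_succ]
    rw [add_comm (g y)]
    ring
  rw [hre]
  have hptw : ∀ u : Fin (k+1) → Y,
      (∏ j, μ (u j)) * ((∑ j : Fin k, g (u j.succ)) / ∑ j, g (u j))
      = (∏ j, μ (u j)) - (∏ j, μ (u j)) * (g (u 0) / ∑ j, g (u j)) := by
    intro u
    have hsum : ∑ j : Fin (k+1), g (u j) = g (u 0) + ∑ j : Fin k, g (u j.succ) :=
      Fin.sum_univ_succ _
    rw [eq_sub_iff_add_eq, ← mul_add, ← add_div,
        add_comm (∑ j : Fin k, g (u j.succ)) (g (u 0)), ← hsum, div_self (hT u).ne', mul_one]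
  rw [Finset.sum_congr rfl (fun u _ => hptw u), Finset.sum_sub_distrib, hPsum, hF0]
  field_simp
  ring

private lemma combined {Y : Type} [Fintype Y] [DecidableEq Y] (k n : ℕ)
    (w : Fin n → Y → ℝ) (hw : ∀ i y, 0 < w i y)
    (D : Fin n → ℝ) (hD1 : ∑ i, D i = 1)
    (μ : Y → ℝ) (hμ1 : ∑ y, μ y = 1) :
    ∑ y : Y, μ y * ∑ v : Fin k → Y, (∏ j, μ (v j)) *
      (∑ i, D i * ((∑ j, w i (v j)) / ((∑ j, w i (v j)) + w i y)))
      = (k : ℝ) / ((k : ℝ) + 1) := by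
  have h1 : (∑ y : Y, μ y * ∑ v : Fin k → Y, (∏ j, μ (v j)) *
      (∑ i, D i * ((∑ j, w i (v j)) / ((∑ j, w i (v j)) + w i y))))
      = ∑ i : Fin n, ∑ v : Fin k → Y, ∑ y : Y,
        D i * ((∏ j, μ (v j)) * μ y * ((∑ j, w i (v j)) / ((∑ j, w i (v j)) + w i y))) := by
    calc (∑ y : Y, μ y * ∑ v : Fin k → Y, (∏ j, μ (v j)) *
          (∑ i, D i * ((∑ j, w i (v j)) / ((∑ j, w i (v j)) + w i y))))
        = ∑ y : Y, ∑ v : Fin k → Y, ∑ i : Fin n,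
            D i * ((∏ j, μ (v j)) * μ y * ((∑ j, w i (v j)) / ((∑ j, w i (v j)) + w i y))) := by
          refine Finset.sum_congr rfl fun y _ => ?_
          rw [Finset.mul_sum]
          refine Finset.sum_congr rfl fun v _ => ?_
          rw [Finset.mul_sum, Finset.mul_sum]
          exact Finset.sum_congr rfl fun i _ => by ring
      _ = ∑ v : Fin k → Y, ∑ y : Y, ∑ i : Fin n,
            D i * ((∏ j, μ (v j)) * μ y * ((∑ j, w i (v j)) / ((∑ j, w i (v j)) + w i y))) :=
          Finset.sum_comm
      _ = ∑ v : Fin k → Y, ∑ i : Fin n, ∑ y : Y,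
            D i * ((∏ j, μ (v j)) * μ y * ((∑ j, w i (v j)) / ((∑ j, w i (v j)) + w i y))) :=
          Finset.sum_congr rfl fun v _ => Finset.sum_comm
      _ = ∑ i : Fin n, ∑ v : Fin k → Y, ∑ y : Y,
            D i * ((∏ j, μ (v j)) * μ y * ((∑ j, w i (v j)) / ((∑ j, w i (v j)) + w i y))) :=
          Finset.sum_comm
  rw [h1]
  have h2 : ∀ i : Fin n, (∑ v : Fin k → Y, ∑ y : Y,
      D i * ((∏ j, μ (v j)) * μ y * ((∑ j, w i (v j)) / ((∑ j, w i (v j)) + w i y))))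
      = D i * ((k : ℝ) / ((k : ℝ) + 1)) := by
    intro i
    rw [← key_identity k (w i) (hw i) μ hμ1]
    simp only [Finset.mul_sum]
  rw [Finset.sum_congr rfl (fun i _ => h2 i), ← Finset.sum_mul, hD1, one_mul]

/-- Theorem 3.1 for mixtures of Plackett–Luce preferences:
`Y` finite nonempty, `w_1, …, w_n : Y → ℝ` positive weight functions, `D` a probability
distribution over `{1,…,n}`, and `k ≥ 1`.  There exists a probability distribution `π`
over size-`k` multisets of `Y` (elements of `Sym Y k`) such that for every `y ∈ Y`,
`E_{i~D} E_{S~π}[ w_i(S) / (w_i(S) + w_i(y)) ] ≥ k/(k+1)`,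
where `w_i(S) := ((S : Multiset Y).map (w i)).sum`. -/
theorem stmt_6 (Y : Type) [Fintype Y] [DecidableEq Y] [Nonempty Y]
    (n : ℕ) (hn : 1 ≤ n)
    (w : Fin n → Y → ℝ) (hw : ∀ i y, 0 < w i y)
    (D : Fin n → ℝ) (hD0 : ∀ i, 0 ≤ D i) (hD1 : ∑ i, D i = 1)
    (k : ℕ) (hk : 1 ≤ k) :
    ∃ π : Sym Y k → ℝ, (∀ S, 0 ≤ π S) ∧ (∑ S, π S = 1) ∧
      ∀ y : Y,
        ∑ i : Fin n, ∑ S : Sym Y k,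
            D i * π S *
              (((S : Multiset Y).map (w i)).sum /
                (((S : Multiset Y).map (w i)).sum + w i y))
          ≥ (k : ℝ) / ((k : ℝ) + 1) := by
  classical
  set c : ℝ := (k : ℝ) / ((k : ℝ) + 1) with hc
  set A : Sym Y k → Y → ℝ := fun S y => ∑ i, D i *
      (((S : Multiset Y).map (w i)).sum / (((S : Multiset Y).map (w i)).sum + w i y)) with hA
  suffices hmain : ∃ π : Sym Y k → ℝ, (∀ S, 0 ≤ π S) ∧ (∑ S, π S = 1) ∧
      ∀ y, c ≤ ∑ S, π S * A S y by
    obtain ⟨π, h0, h1, h2⟩ := hmain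
    refine ⟨π, h0, h1, fun y => ?_⟩
    have h3 := h2 y
    have h4 : (∑ S, π S * A S y) = ∑ i : Fin n, ∑ S : Sym Y k,
        D i * π S * (((S : Multiset Y).map (w i)).sum /
          (((S : Multiset Y).map (w i)).sum + w i y)) := by
      rw [Finset.sum_comm]
      refine Finset.sum_congr rfl fun S _ => ?_
      rw [hA, Finset.mul_sum]
      exact Finset.sum_congr rfl fun i _ => by ring
    rw [ge_iff_le, ← h4]
    exact h3
  by_contra hcon
  push_neg at hcon
  -- linear map sending π to its payoff vector
  set Tl : (Sym Y k → ℝ) →ₗ[ℝ] (Y → ℝ) :=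
    { toFun := fun π y => ∑ S, π S * A S y
      map_add' := by
        intro a b; funext y; simp [add_mul, Finset.sum_add_distrib]
      map_smul' := by
        intro r a; funext y; simp [Finset.mul_sum, mul_assoc] } with hTl
  set C : Set (Y → ℝ) := Tl '' stdSimplex ℝ (Sym Y k) with hC
  set K : Set (Y → ℝ) := {x | ∀ y, c ≤ x y} with hK
  have hCconv : Convex ℝ C := (convex_stdSimplex ℝ _).linear_image Tl
  have hCcomp : IsCompact C :=
    (isCompact_stdSimplex ℝ (Sym Y k)).image Tl.continuous_of_finiteDimensional
  have hKconv : Convex ℝ K := by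
    intro x hx z hz a b ha hb hab y
    have h1 := hx y
    have h2 := hz y
    simp only [Pi.add_apply, Pi.smul_apply, smul_eq_mul]
    have h3 := mul_le_mul_of_nonneg_left h1 ha
    have h4 := mul_le_mul_of_nonneg_left h2 hb
    have h5 : a * c + b * c = c := by rw [← add_mul, hab, one_mul]
    linarith
  have hKcl : IsClosed K := by
    have : K = ⋂ y, {x : Y → ℝ | c ≤ x y} := by
      ext x; simp [hK, Set.mem_iInter]
    rw [this]
    exact isClosed_iInter fun y => isClosed_le continuous_const (continuous_apply y)
  have hdisj : Disjoint C K := by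
    rw [Set.disjoint_left]
    rintro x ⟨π, hπ, rfl⟩ hxK
    obtain ⟨y, hy⟩ := hcon π hπ.1 hπ.2
    exact absurd (hxK y) (not_le.mpr hy)
  obtain ⟨f, u, v, hfC, huv, hfK⟩ :=
    geometric_hahn_banach_compact_closed hCconv hCcomp hKconv hKcl hdisj
  set ρ : Y → ℝ := fun y => f (fun j => if y = j then 1 else 0) with hρ
  have hfeq : ∀ x : Y → ℝ, f x = ∑ y, x y * ρ y := by
    intro x
    conv_lhs => rw [pi_eq_sum_univ x]
    rw [map_sum]
    simp only [map_smul, smul_eq_mul, hρ]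
  have hcvecK : (fun _ : Y => c) ∈ K := fun y => le_refl c
  have hfcvec : f (fun _ : Y => c) = c * ∑ y, ρ y := by
    rw [hfeq, Finset.mul_sum]
  -- all coefficients are nonnegative
  have hρ0 : ∀ y, 0 ≤ ρ y := by
    intro y
    by_contra hneg
    push_neg at hneg
    set t : ℝ := max 0 ((v - f (fun _ : Y => c)) / ρ y) with ht
    have ht0 : 0 ≤ t := le_max_left _ _
    have hbK : ((fun _ : Y => c) + t • (fun j => if y = j then (1:ℝ) else 0)) ∈ K := by
      intro y'
      simp only [Pi.add_apply, Pi.smul_apply, smul_eq_mul]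
      have : 0 ≤ t * (if y = y' then (1:ℝ) else 0) := by
        split_ifs <;> simp [ht0]
      linarith
    have hfb : f ((fun _ : Y => c) + t • (fun j => if y = j then (1:ℝ) else 0))
        = f (fun _ : Y => c) + t * ρ y := by
      rw [map_add, map_smul, smul_eq_mul]
    have h2 : t * ρ y ≤ v - f (fun _ : Y => c) := by
      have h3 : (v - f (fun _ : Y => c)) / ρ y ≤ t := le_max_right _ _
      calc t * ρ y ≤ ((v - f (fun _ : Y => c)) / ρ y) * ρ y :=
            mul_le_mul_of_nonpos_right h3 hneg.le
        _ = v - f (fun _ : Y => c) := div_mul_cancel₀ _ hneg.ne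
    have h4 := hfK _ hbK
    rw [hfb] at h4
    linarith
  -- the sum of coefficients is positive
  have hSρ : 0 < ∑ y, ρ y := by
    rcases lt_or_ge 0 (∑ y, ρ y) with h | h
    · exact h
    · exfalso
      have hzero : ∀ y, ρ y = 0 := by
        have hsum0 : ∑ y, ρ y = 0 :=
          le_antisymm h (Finset.sum_nonneg fun y _ => hρ0 y)
        intro y
        exact (Finset.sum_eq_zero_iff_of_nonneg (fun y _ => hρ0 y)).mp hsum0 y (mem_univ y)
      have hf0 : ∀ x : Y → ℝ, f x = 0 := by
        intro x; rw [hfeq]; simp [hzero]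
      -- C is nonempty
      obtain ⟨y0⟩ := ‹Nonempty Y›
      set π0 : Sym Y k → ℝ := fun S => if S = symOf k (fun _ => y0) then 1 else 0 with hπ0
      have hπ0mem : π0 ∈ stdSimplex ℝ (Sym Y k) := by
        constructor
        · intro S; rw [hπ0]; dsimp only; split_ifs <;> norm_num
        · rw [hπ0]; simp
      have h5 := hfC (Tl π0) ⟨π0, hπ0mem, rfl⟩
      have h6 := hfK _ hcvecK
      rw [hf0] at h5
      rw [hf0] at h6
      linarith
  -- build the i.i.d.-from-μ policy and derive the contradiction
  set μ : Y → ℝ := fun y => ρ y / ∑ y', ρ y' with hμ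
  have hμ1 : ∑ y, μ y = 1 := by
    rw [hμ]; rw [← Finset.sum_div, div_self hSρ.ne']
  have hμ0 : ∀ y, 0 ≤ μ y := fun y => div_nonneg (hρ0 y) hSρ.le
  set πs : Sym Y k → ℝ :=
    fun S => ∑ v : Fin k → Y, if symOf k v = S then ∏ j, μ (v j) else 0 with hπs
  have hπs0 : ∀ S, 0 ≤ πs S := by
    intro S
    refine Finset.sum_nonneg fun v _ => ?_
    split_ifs
    · exact Finset.prod_nonneg fun j _ => hμ0 _
    · exact le_rfl
  have hπs1 : ∑ S, πs S = 1 := by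
    have := sum_push k μ (fun _ => (1:ℝ))
    simp only [mul_one] at this
    simp only [hπs]
    rw [this, sum_prod_eq_one k μ hμ1]
  have hπsmem : πs ∈ stdSimplex ℝ (Sym Y k) := ⟨fun S => hπs0 S, hπs1⟩
  -- compute f (Tl πs)
  have hkey : ∑ y, μ y * ∑ S, πs S * A S y = c := by
    have h1 : ∀ y, (∑ S, πs S * A S y) = ∑ v : Fin k → Y, (∏ j, μ (v j)) *
        (∑ i, D i * ((∑ j, w i (v j)) / ((∑ j, w i (v j)) + w i y))) := by
      intro y
      simp only [hπs]
      rw [sum_push k μ (fun S => A S y)]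
      refine Finset.sum_congr rfl fun v _ => ?_
      rw [hA]
      simp only [symOf_map_sum]
    rw [Finset.sum_congr rfl (fun y _ => by rw [h1 y]), hc]
    exact combined k n w hw D hD1 μ hμ1
  have hTπs : f (Tl πs) = (∑ y', ρ y') * c := by
    rw [hfeq]
    have : ∀ y, Tl πs y * ρ y = (∑ y', ρ y') * (μ y * ∑ S, πs S * A S y) := by
      intro y
      have hρy : ρ y = (∑ y', ρ y') * μ y := by
        rw [hμ]; field_simp
      rw [hρy]
      show (∑ S, πs S * A S y) * ((∑ y', ρ y') * μ y)
          = (∑ y', ρ y') * (μ y * ∑ S, πs S * A S y)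
      ring
    rw [Finset.sum_congr rfl (fun y _ => this y), ← Finset.mul_sum, hkey]
  have h5 := hfC (Tl πs) ⟨πs, hπsmem, rfl⟩
  have h6 := hfK _ hcvecK
  rw [hfcvec] at h6
  rw [hTπs] at h5
  linarith [mul_comm c (∑ y', ρ y')]
end

section
/- (Proposition 3.3: lower bound for populations of rankings.) Let k ≥ 1, let Y be a finite set with |Y| = m, and let D be the uniform distribution over all m! linear orders on Y. Then for every probability distribution π over size-k multisets of Y, there exists a response y ∈ Y such that Pr_{S~π, ≻~D}[max(S) ≽ y] ≤ k/(m(k+1)) + k/(k+1). -/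
open Finset

set_option linter.unusedSectionVars false

section Aux
variable {Y : Type} [Fintype Y] [DecidableEq Y]

private def topC (A : Finset Y) (y : Y) : ℕ :=
  (Finset.univ.filter fun r : Y ≃ Fin (Fintype.card Y) =>
    ∀ z ∈ A, z ≠ y → (r z).val < (r y).val).card

private lemma ind_iff {k : ℕ} (hk : 1 ≤ k) (S : Sym Y k)
    (r : Y ≃ Fin (Fintype.card Y)) (y : Y) :
    ((r y).val ≤ ((S : Multiset Y).map fun z => (r z).val).sup) ↔
      ¬ (∀ s ∈ (S : Multiset Y), (r s).val < (r y).val) := by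
  have hcard : Multiset.card (S : Multiset Y) = k := S.prop
  have hne : ∃ s, s ∈ (S : Multiset Y) := by
    rw [← Multiset.card_pos_iff_exists_mem, hcard]; omega
  obtain ⟨s0, hs0⟩ := hne
  constructor
  · intro h hall
    have h1 : ∀ a ∈ (S : Multiset Y).map (fun z => (r z).val), a ≤ (r y).val - 1 := by
      intro a ha
      obtain ⟨s, hs, rfl⟩ := Multiset.mem_map.mp ha
      have := hall s hs; omega
    have h2 := Multiset.sup_le.mpr h1
    have h3 := hall s0 hs0
    omega
  · intro h
    push_neg at h
    obtain ⟨s, hs, hle⟩ := h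
    exact le_trans hle (Multiset.le_sup (Multiset.mem_map_of_mem _ hs))

private lemma topC_eq (A : Finset Y) {y y' : Y} (hy : y ∈ A) (hy' : y' ∈ A) :
    topC A y = topC A y' := by
  rcases eq_or_ne y y' with rfl | hne
  · rfl
  unfold topC
  refine Finset.card_bij' (fun r _ => (Equiv.swap y y').trans r)
      (fun r _ => (Equiv.swap y y').trans r) ?_ ?_ ?_ ?_
  · intro r hr
    simp only [mem_filter, mem_univ, true_and] at hr ⊢
    intro z hz hzy'
    rcases eq_or_ne z y with rfl | hzy
    · simpa [Equiv.swap_apply_left, Equiv.swap_apply_right] using hr y' hy' hne.symm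
    · simpa [Equiv.swap_apply_of_ne_of_ne hzy hzy', Equiv.swap_apply_right] using hr z hz hzy
  · intro r hr
    simp only [mem_filter, mem_univ, true_and] at hr ⊢
    intro z hz hzy
    rcases eq_or_ne z y' with rfl | hzy'
    · simpa [Equiv.swap_apply_left, Equiv.swap_apply_right] using hr y hy hne
    · simpa [Equiv.swap_apply_of_ne_of_ne hzy hzy', Equiv.swap_apply_left] using hr z hz hzy'
  · intro r _
    simp [← Equiv.trans_assoc, Equiv.swap_swap]
  · intro r _
    simp [← Equiv.trans_assoc, Equiv.swap_swap]

private lemma topC_sum (A : Finset Y) (hA : A.Nonempty) :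
    ∑ y ∈ A, topC A y = Fintype.card (Y ≃ Fin (Fintype.card Y)) := by
  classical
  set f : (Y ≃ Fin (Fintype.card Y)) → Y :=
    fun r => r.symm ((A.image fun z => r z).max' (hA.image _)) with hf
  have hmem : ∀ r : Y ≃ Fin (Fintype.card Y), f r ∈ A := by
    intro r
    obtain ⟨a, ha, hae⟩ := Finset.mem_image.mp
      (Finset.max'_mem (A.image fun z => r z) (hA.image _))
    simpa [hf, ← hae] using ha
  have key : ∀ y ∈ A, (Finset.univ.filter fun r : Y ≃ Fin (Fintype.card Y) => f r = y)
      = Finset.univ.filter fun r => ∀ z ∈ A, z ≠ y → (r z).val < (r y).val := by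
    intro y hy
    ext r
    simp only [mem_filter, mem_univ, true_and]
    constructor
    · intro h z hz hzy
      have hle : (r z) ≤ (A.image fun w => r w).max' (hA.image _) :=
        Finset.le_max' _ _ (Finset.mem_image_of_mem _ hz)
      have : (A.image fun w => r w).max' (hA.image _) = r y := by
        have := congrArg r h; simpa [hf] using this
      rw [this] at hle
      have hne : r z ≠ r y := fun he => hzy (r.injective he)
      exact lt_of_le_of_ne (Fin.le_def.mp hle) (fun he => hne (Fin.ext he))
    · intro h
      have hy' : f r ∈ A := hmem r
      by_contra hne
      have h2 := h (f r) hy' hne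
      have hle : (r y) ≤ (A.image fun w => r w).max' (hA.image _) :=
        Finset.le_max' _ _ (Finset.mem_image_of_mem _ hy)
      have : r (f r) = (A.image fun w => r w).max' (hA.image _) := by simp [hf]
      rw [this] at h2
      omega
  have := Finset.card_eq_sum_card_fiberwise (f := f) (s := Finset.univ) (t := A)
    (fun x _ => hmem x)
  rw [Finset.card_univ] at this
  rw [this]
  exact Finset.sum_congr rfl fun y hy => by rw [topC, ← key y hy]

private lemma perS {k : ℕ} (hk : 1 ≤ k) (S : Sym Y k) :
    ∑ y : Y, ∑ r : Y ≃ Fin (Fintype.card Y),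
        (if (r y).val ≤ ((S : Multiset Y).map fun z => (r z).val).sup then (1:ℝ) else 0)
      ≤ (Fintype.card (Y ≃ Fin (Fintype.card Y)) : ℝ) *
          ((Fintype.card Y : ℝ) * k + k) / (k + 1) := by
  classical
  set m := Fintype.card Y with hm
  set c := Fintype.card (Y ≃ Fin m) with hcdef
  set T := (S : Multiset Y).toFinset with hT
  have hcard : Multiset.card (S : Multiset Y) = k := S.prop
  have hTne : T.Nonempty := by
    obtain ⟨s0, hs0⟩ : ∃ s, s ∈ (S : Multiset Y) := by
      rw [← Multiset.card_pos_iff_exists_mem, hcard]; omega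
    exact ⟨s0, Multiset.mem_toFinset.mpr hs0⟩
  have hd : T.card ≤ k := by
    have h := Multiset.toFinset_card_le (S : Multiset Y)
    rw [← hT] at h
    omega
  have hdm : T.card ≤ m := by
    simpa [hm] using Finset.card_le_card (Finset.subset_univ T)
  set C : Y → ℕ := fun y =>
    (Finset.univ.filter fun r : Y ≃ Fin m =>
      ∀ s ∈ (S : Multiset Y), (r s).val < (r y).val).card with hC
  have hkpos : (0:ℝ) < (k:ℝ) + 1 := by positivity
  have hc0 : (0:ℝ) ≤ (c:ℝ) := by positivity
  -- Step A
  have hstep : ∀ y : Y,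
      (∑ r : Y ≃ Fin m,
        (if (r y).val ≤ ((S : Multiset Y).map fun z => (r z).val).sup then (1:ℝ) else 0))
      = (c:ℝ) - (C y : ℝ) := by
    intro y
    have hptw : ∀ r : Y ≃ Fin m,
        (if (r y).val ≤ ((S : Multiset Y).map fun z => (r z).val).sup then (1:ℝ) else 0)
        = 1 - (if (∀ s ∈ (S : Multiset Y), (r s).val < (r y).val) then (1:ℝ) else 0) := by
      intro r
      rw [if_congr (ind_iff hk S r y) rfl rfl]
      by_cases h : ∀ s ∈ (S : Multiset Y), (r s).val < (r y).val
      · rw [if_neg (not_not_intro h), if_pos h]; norm_num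
      · rw [if_pos h, if_neg h]; norm_num
    rw [Finset.sum_congr rfl fun r _ => hptw r, Finset.sum_sub_distrib,
      Finset.sum_const, Finset.sum_boole, Finset.card_univ]
    simp [hC, hcdef]
  -- Step B
  have hCbound : ∀ y ∉ T, (c:ℝ) / ((k:ℝ)+1) ≤ (C y : ℝ) := by
    intro y hyT
    set A := insert y T with hA
    have hyA : y ∈ A := Finset.mem_insert_self y T
    have hCy : C y = topC A y := by
      simp only [hC]
      unfold topC
      apply congrArg Finset.card
      ext r
      simp only [Finset.mem_filter, Finset.mem_univ, true_and]
      constructor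
      · intro h z hz hzy
        rcases Finset.mem_insert.mp hz with rfl | hzT
        · exact absurd rfl hzy
        · exact h z (Multiset.mem_toFinset.mp hzT)
      · intro h s hs
        have hsT : s ∈ T := Multiset.mem_toFinset.mpr hs
        have hsy : s ≠ y := fun he => hyT (he ▸ hsT)
        exact h s (Finset.mem_insert_of_mem hsT) hsy
    have hAcard : A.card = T.card + 1 := Finset.card_insert_of_notMem hyT
    have hsum : A.card * topC A y = c := by
      have h1 := topC_sum A ⟨y, hyA⟩
      have h2 : ∀ y' ∈ A, topC A y' = topC A y := fun y' hy' => topC_eq A hy' hyA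
      rw [Finset.sum_congr rfl h2, Finset.sum_const, smul_eq_mul] at h1
      exact h1
    have hAk : A.card ≤ k + 1 := by omega
    rw [div_le_iff₀ hkpos, hCy]
    have : (c:ℝ) = (topC A y : ℝ) * (A.card : ℝ) := by
      rw [← hsum]; push_cast; ring
    rw [this]
    have h1 : (0:ℝ) ≤ (topC A y : ℝ) := Nat.cast_nonneg _
    have h2 : (A.card : ℝ) ≤ (k:ℝ) + 1 := by exact_mod_cast hAk
    nlinarith
  have hC0 : ∀ y, (0:ℝ) ≤ (C y : ℝ) := fun y => Nat.cast_nonneg _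
  -- Step C
  calc ∑ y : Y, ∑ r : Y ≃ Fin m,
        (if (r y).val ≤ ((S : Multiset Y).map fun z => (r z).val).sup then (1:ℝ) else 0)
      = ∑ y : Y, ((c:ℝ) - (C y : ℝ)) := Finset.sum_congr rfl fun y _ => hstep y
    _ = (m:ℝ) * c - ∑ y : Y, (C y : ℝ) := by
        rw [Finset.sum_sub_distrib, Finset.sum_const, Finset.card_univ]
        push_cast [hm]; ring
    _ ≤ (m:ℝ) * c - ∑ y ∈ Finset.univ \ T, (C y : ℝ) := by
        have := Finset.sum_le_sum_of_subset_of_nonneg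
          (Finset.sdiff_subset : Finset.univ \ T ⊆ Finset.univ)
          (fun y _ _ => hC0 y)
        linarith
    _ ≤ (m:ℝ) * c - ((m:ℝ) - T.card) * ((c:ℝ) / ((k:ℝ)+1)) := by
        have h1 : ∀ y ∈ Finset.univ \ T, (c:ℝ)/((k:ℝ)+1) ≤ (C y : ℝ) := by
          intro y hy
          exact hCbound y (Finset.mem_sdiff.mp hy).2
        have h2 := Finset.card_nsmul_le_sum _ _ _ h1
        have h3 : (Finset.univ \ T).card = m - T.card := by
          rw [Finset.card_sdiff_of_subset (Finset.subset_univ T), Finset.card_univ]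
        rw [h3, nsmul_eq_mul] at h2
        have h4 : ((m - T.card : ℕ) : ℝ) = (m:ℝ) - (T.card : ℝ) := by
          push_cast [Nat.cast_sub hdm]; ring
        rw [h4] at h2
        linarith
    _ ≤ (c:ℝ) * ((m:ℝ) * k + k) / ((k:ℝ) + 1) := by
        rw [le_div_iff₀ hkpos]
        have hdR : (T.card : ℝ) ≤ (k:ℝ) := by exact_mod_cast hd
        have hmd : (T.card : ℝ) ≤ (m:ℝ) := by exact_mod_cast hdm
        have hfield : ((c:ℝ) / ((k:ℝ)+1)) * ((k:ℝ)+1) = c := by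
          field_simp
        nlinarith [hc0]

end Aux

/-- Proposition 3.3: lower bound for populations of rankings:
`k ≥ 1`, `Y` a finite (nonempty) set with `|Y| = m`, and `D` the uniform distribution
over all `m!` linear orders on `Y` (encoded as the uniform distribution over
equivalences `r : Y ≃ Fin m`).  For every probability distribution `π` over size-`k`
multisets of `Y` (elements of `Sym Y k`) there exists a response `y ∈ Y` such that
`Pr_{S~π, r~D}[max(S) ≽ y] ≤ k/(m(k+1)) + k/(k+1)`, where `max(S) ≽ y` iff
`(r y).val ≤ sup of ranks of S`. -/
theorem stmt_9 (Y : Type) [Fintype Y] [DecidableEq Y] [Nonempty Y]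
    (k : ℕ) (hk : 1 ≤ k)
    (π : Sym Y k → ℝ) (hπ0 : ∀ S, 0 ≤ π S) (hπ1 : ∑ S, π S = 1) :
    ∃ y : Y,
      ∑ S : Sym Y k, ∑ r : Y ≃ Fin (Fintype.card Y),
          π S * (1 / (Fintype.card (Y ≃ Fin (Fintype.card Y)) : ℝ)) *
            (if (r y).val ≤ (((S : Multiset Y)).map fun z => (r z).val).sup
             then (1 : ℝ) else 0)
        ≤ (k : ℝ) / ((Fintype.card Y : ℝ) * ((k : ℝ) + 1)) + (k : ℝ) / ((k : ℝ) + 1) := by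
  classical
  set m := Fintype.card Y with hm
  set c := Fintype.card (Y ≃ Fin m) with hc
  have hm0 : 0 < m := Fintype.card_pos
  have : Nonempty (Y ≃ Fin m) := ⟨Fintype.equivFin Y⟩
  have hc0 : 0 < c := Fintype.card_pos
  have hcR : (0:ℝ) < (c:ℝ) := by exact_mod_cast hc0
  have hmR : (0:ℝ) < (m:ℝ) := by exact_mod_cast hm0
  have hkR : (0:ℝ) < (k:ℝ) + 1 := by positivity
  set B : ℝ := (k : ℝ) / ((m : ℝ) * ((k : ℝ) + 1)) + (k : ℝ) / ((k : ℝ) + 1) with hB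
  set F : Y → ℝ := fun y =>
    ∑ S : Sym Y k, ∑ r : Y ≃ Fin m,
        π S * (1 / (c : ℝ)) *
          (if (r y).val ≤ ((S : Multiset Y).map fun z => (r z).val).sup
           then (1 : ℝ) else 0) with hF
  have hsum : ∑ y : Y, F y ≤ ∑ y : Y, B := by
    have h1 : ∑ y : Y, F y
        = ∑ S : Sym Y k, π S * (1 / (c : ℝ)) *
            ∑ y : Y, ∑ r : Y ≃ Fin m,
              (if (r y).val ≤ ((S : Multiset Y).map fun z => (r z).val).sup
               then (1 : ℝ) else 0) := by
      rw [Finset.sum_comm]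
      refine Finset.sum_congr rfl fun S _ => ?_
      rw [Finset.mul_sum]
      refine Finset.sum_congr rfl fun y _ => ?_
      rw [Finset.mul_sum]
    have h2 : ∀ S : Sym Y k, π S * (1 / (c : ℝ)) *
            (∑ y : Y, ∑ r : Y ≃ Fin m,
              (if (r y).val ≤ ((S : Multiset Y).map fun z => (r z).val).sup
               then (1 : ℝ) else 0))
        ≤ π S * (((m:ℝ) * k + k) / ((k:ℝ) + 1)) := by
      intro S
      have hb := perS hk S
      have hnn : (0:ℝ) ≤ π S * (1 / (c : ℝ)) := mul_nonneg (hπ0 S) (by positivity)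
      calc π S * (1 / (c : ℝ)) * _ ≤ π S * (1 / (c : ℝ)) *
            ((c : ℝ) * ((m : ℝ) * k + k) / ((k:ℝ) + 1)) := by
              exact mul_le_mul_of_nonneg_left hb hnn
        _ = π S * (((m:ℝ) * k + k) / ((k:ℝ) + 1)) := by
              field_simp
    have h3 : ∑ y : Y, B = ((m:ℝ) * k + k) / ((k:ℝ) + 1) := by
      rw [Finset.sum_const, Finset.card_univ, ← hm, nsmul_eq_mul, hB]
      field_simp
      ring
    rw [h1, h3]
    calc ∑ S : Sym Y k, π S * (1 / (c : ℝ)) * _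
        ≤ ∑ S : Sym Y k, π S * (((m:ℝ) * k + k) / ((k:ℝ) + 1)) :=
          Finset.sum_le_sum fun S _ => h2 S
      _ = ((m:ℝ) * k + k) / ((k:ℝ) + 1) := by
          rw [← Finset.sum_mul, hπ1, one_mul]
  obtain ⟨y, _, hy⟩ := Finset.exists_le_of_sum_le (Finset.univ_nonempty) hsum
  exact ⟨y, hy⟩
end

section
/- (Theorem 4.2, robust-alignment property of symmetric Nash equilibria, for populations of rankings.) Let D be a probability distribution over linear orders on a finite nonempty set Y, let k ≥ 1, and let p be a probability distribution on Y satisfying the symmetric-equilibrium condition: for every probability distribution q on Y, Pr_{≻~D, y~q, S~p^{⊗k}}[ y ≻ max(S) ] ≤ Pr_{≻~D, y~p, S~p^{⊗k}}[ y ≻ max(S) ]. Then for every probability distribution q on Y, Pr_{≻~D, y~q, S~p^{⊗k}}[ max(S) ≽ y ] ≥ 1 − 1/(k+1) = k/(k+1). -/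
open Finset

lemma aux_sum_prod_one {Y : Type} [Fintype Y] [DecidableEq Y] (p : Y → ℝ)
    (hp1 : ∑ y, p y = 1) (m : ℕ) : ∑ v : Fin m → Y, ∏ i, p (v i) = 1 := by
  have := Finset.prod_univ_sum (fun _ : Fin m => (univ : Finset Y)) (fun _ y => p y)
  simp only [Fintype.piFinset_univ] at this
  rw [← this]
  simp [hp1]

lemma aux_core {Y : Type} [Fintype Y] [DecidableEq Y] (p : Y → ℝ)
    (hp0 : ∀ y, 0 ≤ p y) (hp1 : ∑ y, p y = 1) (k : ℕ)
    {α : Type} [LinearOrder α] (f : Y → α) :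
    ∑ y, ∑ v : Fin k → Y, p y * (∏ i, p (v i)) *
      (if ∀ i, f (v i) < f y then (1 : ℝ) else 0) ≤ 1 / (k + 1) := by
  set g : (Fin (k+1) → Y) → Fin (k+1) → ℝ := fun w j =>
    (∏ i, p (w i)) * (if ∀ i, i ≠ j → f (w i) < f (w j) then (1 : ℝ) else 0) with hg
  -- step 1: LHS = ∑ w, g w 0
  have h0 : ∑ y, ∑ v : Fin k → Y, p y * (∏ i, p (v i)) *
      (if ∀ i, f (v i) < f y then (1 : ℝ) else 0) = ∑ w, g w 0 := by
    have hA : ∑ yv : Y × (Fin k → Y), p yv.1 * (∏ i, p (yv.2 i)) *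
        (if ∀ i, f (yv.2 i) < f yv.1 then (1 : ℝ) else 0) = ∑ w, g w 0 := by
      apply Fintype.sum_equiv (Fin.consEquiv fun _ : Fin (k+1) => Y)
      rintro ⟨y, v⟩
      simp only [hg, Fin.consEquiv_apply]
      rw [Fin.prod_univ_succ]
      simp only [Fin.cons_zero, Fin.cons_succ]
      have : (∀ i : Fin (k+1), i ≠ 0 → f ((Fin.cons y v : Fin (k+1) → Y) i) < f y) ↔
          ∀ i : Fin k, f (v i) < f y := by
        constructor
        · intro h i
          simpa using h i.succ (Fin.succ_ne_zero i)
        · intro h i hi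
          obtain ⟨j, rfl⟩ := Fin.exists_succ_eq.mpr hi
          simpa using h j
      exact congrArg _ (if_congr this.symm rfl rfl)
    rw [Fintype.sum_prod_type] at hA
    exact hA
  -- step 2: ∑ w, g w 0 = ∑ w, g w j for all j
  have h1 : ∀ j : Fin (k+1), ∑ w, g w j = ∑ w, g w 0 := by
    intro j
    set σ := Equiv.swap (0 : Fin (k+1)) j with hσ
    have hσ0 : σ.symm 0 = j := by simp [hσ]
    apply Fintype.sum_equiv (Equiv.arrowCongr σ (Equiv.refl Y))
    intro w
    simp only [hg, Equiv.arrowCongr_apply, Equiv.refl_apply, Function.comp]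
    have hprod : ∏ i, p (w (σ.symm i)) = ∏ i, p (w i) :=
      Equiv.prod_comp σ.symm (fun i => p (w i))
    rw [hprod]
    refine congrArg _ (if_congr ?_ rfl rfl)
    constructor
    · intro h i hi
      rw [hσ0]
      refine h (σ.symm i) ?_
      intro hc
      apply hi
      have hi2 : i = σ j := by rw [← hc]; simp
      simpa [hσ] using hi2
    · intro h i hi
      have h2 : σ i ≠ 0 := by
        intro hc
        apply hi
        have hi2 : i = σ.symm 0 := by rw [← hc]; simp
        rwa [hσ0] at hi2
      have h3 := h (σ i) h2
      rw [hσ0] at h3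
      simpa using h3
  -- step 3: sum over j
  have h2 : ∑ j : Fin (k+1), ∑ w, g w j ≤ 1 := by
    rw [Finset.sum_comm]
    calc ∑ w : Fin (k+1) → Y, ∑ j, g w j
        ≤ ∑ w : Fin (k+1) → Y, ∏ i, p (w i) := by
          apply Finset.sum_le_sum
          intro w _
          have hpw : 0 ≤ ∏ i, p (w i) := Finset.prod_nonneg fun i _ => hp0 _
          simp only [hg, ← Finset.mul_sum]
          calc (∏ i, p (w i)) * ∑ j, (if ∀ i, i ≠ j → f (w i) < f (w j) then (1:ℝ) else 0)
              ≤ (∏ i, p (w i)) * 1 := by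
                apply mul_le_mul_of_nonneg_left _ hpw
                rw [Finset.sum_boole]
                norm_cast
                rw [Finset.card_le_one]
                intro a ha b hb
                simp only [mem_filter] at ha hb
                by_contra hab
                exact lt_asymm (ha.2 b (Ne.symm hab)) (hb.2 a hab)
            _ = ∏ i, p (w i) := mul_one _
      _ = 1 := aux_sum_prod_one p hp1 (k+1)
  have h3 : (k + 1 : ℝ) * (∑ w, g w 0) ≤ 1 := by
    calc (k + 1 : ℝ) * (∑ w, g w 0) = ∑ j : Fin (k+1), ∑ w, g w j := by
          rw [Finset.sum_congr rfl (fun j _ => h1 j)]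
          simp [mul_comm]
      _ ≤ 1 := h2
  rw [h0, le_div_iff₀ (by positivity)]
  linarith [h3]

/-- Theorem 4.2, robust alignment of symmetric Nash equilibria, for
populations of rankings: `D` is a probability distribution over linear orders on a
finite nonempty `Y` (encoded as equivalences `r : Y ≃ Fin (Fintype.card Y)`, where
`y ≻ y'` iff `r y' < r y`), `k ≥ 1`, and `p` is a probability distribution on `Y`
satisfying the symmetric-equilibrium condition: for every probability distribution `q`
on `Y`, `Pr_{r~D, y~q, S~p^{⊗k}}[y ≻ max(S)] ≤ Pr_{r~D, y~p, S~p^{⊗k}}[y ≻ max(S)]`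
(where `S = (v 1, …, v k)` are `k` i.i.d. samples from `p` and `y ≻ max(S)` iff
`∀ i, r (v i) < r y`).  Then for every probability distribution `q` on `Y`,
`Pr_{r~D, y~q, S~p^{⊗k}}[max(S) ≽ y] ≥ 1 − 1/(k+1) = k/(k+1)`
(where `max(S) ≽ y` iff `∃ i, r y ≤ r (v i)`). -/
theorem stmt_11 (Y : Type) [Fintype Y] [DecidableEq Y] [Nonempty Y]
    (D : (Y ≃ Fin (Fintype.card Y)) → ℝ)
    (hD0 : ∀ r, 0 ≤ D r) (hD1 : ∑ r, D r = 1)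
    (k : ℕ) (hk : 1 ≤ k)
    (p : Y → ℝ) (hp0 : ∀ y, 0 ≤ p y) (hp1 : ∑ y, p y = 1)
    (heq : ∀ q : Y → ℝ, (∀ y, 0 ≤ q y) → (∑ y, q y = 1) →
      (∑ r : Y ≃ Fin (Fintype.card Y), ∑ y : Y, ∑ v : Fin k → Y,
          D r * q y * (∏ i, p (v i)) *
            (if ∀ i, r (v i) < r y then (1 : ℝ) else 0))
        ≤ ∑ r : Y ≃ Fin (Fintype.card Y), ∑ y : Y, ∑ v : Fin k → Y,
            D r * p y * (∏ i, p (v i)) *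
              (if ∀ i, r (v i) < r y then (1 : ℝ) else 0)) :
    ∀ q : Y → ℝ, (∀ y, 0 ≤ q y) → (∑ y, q y = 1) →
      (∑ r : Y ≃ Fin (Fintype.card Y), ∑ y : Y, ∑ v : Fin k → Y,
          D r * q y * (∏ i, p (v i)) *
            (if ∃ i, r y ≤ r (v i) then (1 : ℝ) else 0))
        ≥ (k : ℝ) / ((k : ℝ) + 1) := by

  intro q hq0 hq1
  -- total mass is 1
  have hM : ∀ (q : Y → ℝ), (∑ y, q y = 1) →
      ∑ r : Y ≃ Fin (Fintype.card Y), ∑ y : Y, ∑ v : Fin k → Y, D r * q y * (∏ i, p (v i)) = 1 := by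
    intro q hq1
    have hin : ∀ r : Y ≃ Fin (Fintype.card Y), ∑ y : Y, ∑ v : Fin k → Y, D r * q y * (∏ i, p (v i)) = D r := by
      intro r
      simp only [← Finset.mul_sum, aux_sum_prod_one p hp1 k, mul_one, hq1]
    rw [Finset.sum_congr rfl fun r _ => hin r, hD1]
  -- the "win" sum for p is at most 1/(k+1)
  have hWp : ∑ r : Y ≃ Fin (Fintype.card Y), ∑ y : Y, ∑ v : Fin k → Y,
      D r * p y * (∏ i, p (v i)) * (if ∀ i, r (v i) < r y then (1 : ℝ) else 0)
      ≤ 1 / ((k : ℝ) + 1) := by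
    calc ∑ r : Y ≃ Fin (Fintype.card Y), ∑ y : Y, ∑ v : Fin k → Y,
        D r * p y * (∏ i, p (v i)) * (if ∀ i, r (v i) < r y then (1 : ℝ) else 0)
        = ∑ r : Y ≃ Fin (Fintype.card Y), D r * ∑ y : Y, ∑ v : Fin k → Y,
            p y * (∏ i, p (v i)) * (if ∀ i, r (v i) < r y then (1 : ℝ) else 0) := by
          refine Finset.sum_congr rfl fun r _ => ?_
          rw [Finset.mul_sum]
          refine Finset.sum_congr rfl fun y _ => ?_
          rw [Finset.mul_sum]
          exact Finset.sum_congr rfl fun v _ => by ring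
      _ ≤ ∑ r : Y ≃ Fin (Fintype.card Y), D r * (1 / ((k : ℝ) + 1)) := by
          refine Finset.sum_le_sum fun r _ => ?_
          exact mul_le_mul_of_nonneg_left (aux_core p hp0 hp1 k (fun y => r y)) (hD0 r)
      _ = 1 / ((k : ℝ) + 1) := by rw [← Finset.sum_mul, hD1, one_mul]
  -- complement identity
  have hcompl : ∀ (r : Y ≃ Fin (Fintype.card Y)) (y : Y) (v : Fin k → Y),
      (if ∃ i, r y ≤ r (v i) then (1 : ℝ) else 0)
        = 1 - (if ∀ i, r (v i) < r y then (1 : ℝ) else 0) := by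
    intro r y v
    by_cases h : ∀ i, r (v i) < r y
    · have h2 : ¬ ∃ i, r y ≤ r (v i) := by push_neg; exact h
      simp [h, h2]
    · have h2 : ∃ i, r y ≤ r (v i) := by push_neg at h; exact h
      simp [h, h2]
  have hT : ∑ r : Y ≃ Fin (Fintype.card Y), ∑ y : Y, ∑ v : Fin k → Y,
      D r * q y * (∏ i, p (v i)) * (if ∃ i, r y ≤ r (v i) then (1 : ℝ) else 0)
      = 1 - ∑ r : Y ≃ Fin (Fintype.card Y), ∑ y : Y, ∑ v : Fin k → Y,
          D r * q y * (∏ i, p (v i)) * (if ∀ i, r (v i) < r y then (1 : ℝ) else 0) := by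
    simp only [hcompl, mul_sub, mul_one, Finset.sum_sub_distrib]
    rw [hM q hq1]
  have hWq := heq q hq0 hq1
  have hkey : (k : ℝ) / ((k : ℝ) + 1) = 1 - 1 / ((k : ℝ) + 1) := by
    have : ((k : ℝ) + 1) ≠ 0 := by positivity
    field_simp
    ring
  rw [ge_iff_le, hT, hkey]
  linarith
end

section
/- (Theorem 4.3, main theorem, for populations of rankings: optimal U-alignment via a single-output policy.) Let D be a probability distribution over linear orders on a finite nonempty set Y. Then for every k ≥ 1 there exists a probability distribution p_k on Y such that for every probability distribution q on Y, Pr_{≻~D, y~q, S~p_k^{⊗k}}[ max(S) ≽ y ] ≥ k/(k+1). -/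
open Finset

/-- Binomial-type inequality. -/
lemma aux_pow_ineq (s q : ℝ) (hs : 0 ≤ s) (hq : 0 ≤ q) (k : ℕ) :
    s ^ (k + 1) + ((k : ℝ) + 1) * q * s ^ k ≤ (s + q) ^ (k + 1) := by
  induction k with
  | zero => simp
  | succ k ih =>
    have h2 : (s + q) * (s ^ (k + 1) + ((k : ℝ) + 1) * q * s ^ k)
        ≤ (s + q) * (s + q) ^ (k + 1) :=
      mul_le_mul_of_nonneg_left ih (by linarith)
    have h3 : (s + q) ^ (k + 1 + 1) = (s + q) * (s + q) ^ (k + 1) := by ring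
    have h4 : 0 ≤ ((k:ℝ)+1) * (q * q * s ^ k) := by positivity
    have hexp : (s + q) * (s ^ (k + 1) + ((k : ℝ) + 1) * q * s ^ k)
        = s ^ (k + 1 + 1) + ((k:ℝ) + 1 + 1) * q * s ^ (k + 1)
          + ((k:ℝ)+1) * (q * q * s ^ k) := by ring
    push_cast
    linarith

/-- Telescoping bound on partial-sum powers. -/
lemma aux_telescope (Q : ℕ → ℝ) (hQ : ∀ i, 0 ≤ Q i) (k : ℕ) (n : ℕ) :
    ((k : ℝ) + 1) * ∑ j ∈ range n, Q j * (∑ i ∈ range j, Q i) ^ k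
      ≤ (∑ i ∈ range n, Q i) ^ (k + 1) := by
  induction n with
  | zero => simp
  | succ n ih =>
    rw [sum_range_succ, sum_range_succ (f := Q), mul_add]
    have hs : 0 ≤ ∑ i ∈ range n, Q i := sum_nonneg fun i _ => hQ i
    have := aux_pow_ineq (∑ i ∈ range n, Q i) (Q n) hs (hQ n) k
    nlinarith [this, ih]

/-- Per-ranking key inequality: sampling i.i.d. from `q` against `q` itself. -/
lemma key_rank (Y : Type) [Fintype Y] [DecidableEq Y]
    (r : Y ≃ Fin (Fintype.card Y)) (k : ℕ) (q : Y → ℝ)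
    (hq0 : ∀ y, 0 ≤ q y) (hq1 : ∑ y, q y = 1) :
    ∑ y, q y * (∑ z ∈ univ.filter (fun z => r z < r y), q z) ^ k
      ≤ 1 / ((k : ℝ) + 1) := by
  set Q : ℕ → ℝ := fun m => ∑ z ∈ univ.filter (fun z => (r z : ℕ) = m), q z with hQdef
  have hQ0 : ∀ m, 0 ≤ Q m := fun m => sum_nonneg fun z _ => hq0 z
  have hA : ∀ M : ℕ, ∑ i ∈ range M, Q i
      = ∑ z ∈ univ.filter (fun z => (r z : ℕ) < M), q z := by
    intro M
    rw [← Finset.sum_fiberwise_of_maps_to (g := fun z => (r z : ℕ))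
      (t := range M) (fun z hz => by
        simp only [mem_filter, mem_univ, true_and] at hz; exact mem_range.mpr hz) q]
    refine sum_congr rfl fun i hi => ?_
    refine sum_congr ?_ fun _ _ => rfl
    have hiM := mem_range.mp hi
    ext z
    simp only [filter_filter, mem_filter, mem_univ, true_and]
    omega
  have hTot : ∑ i ∈ range (Fintype.card Y), Q i = 1 := by
    rw [hA, ← hq1]
    refine sum_congr ?_ fun _ _ => rfl
    rw [filter_true_of_mem fun z _ => (r z).isLt]
  have hσ : ∀ y, ∑ z ∈ univ.filter (fun z => r z < r y), q z
      = ∑ i ∈ range (r y : ℕ), Q i := by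
    intro y
    rw [hA]
    refine sum_congr ?_ fun _ _ => rfl
    ext z
    simp only [mem_filter, mem_univ, true_and, Fin.lt_def]
  have hB : ∑ y, q y * (∑ z ∈ univ.filter (fun z => r z < r y), q z) ^ k
      = ∑ j ∈ range (Fintype.card Y), Q j * (∑ i ∈ range j, Q i) ^ k := by
    rw [← Finset.sum_fiberwise_of_maps_to (g := fun y => (r y : ℕ)) (t := range (Fintype.card Y))
      (fun y _ => mem_range.mpr (r y).isLt)
      (fun y => q y * (∑ z ∈ univ.filter (fun z => r z < r y), q z) ^ k)]
    refine sum_congr rfl fun j hj => ?_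
    rw [hQdef]
    rw [Finset.sum_mul]
    refine sum_congr rfl fun y hy => ?_
    have hyj : (r y : ℕ) = j := by
      simp only [mem_filter, mem_univ, true_and] at hy; exact hy
    rw [hσ, hyj]
  rw [hB, le_div_iff₀ (by positivity : (0:ℝ) < (k:ℝ) + 1), mul_comm]
  calc ((k:ℝ) + 1) * ∑ j ∈ range (Fintype.card Y), Q j * (∑ i ∈ range j, Q i) ^ k
      ≤ (∑ i ∈ range (Fintype.card Y), Q i) ^ (k + 1) := aux_telescope Q hQ0 k (Fintype.card Y)
    _ = 1 := by rw [hTot, one_pow]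

/-- The "failure probability" of policy `p` against response `y`. -/
noncomputable def gfail (Y : Type) [Fintype Y] [DecidableEq Y]
    (D : (Y ≃ Fin (Fintype.card Y)) → ℝ) (k : ℕ) (y : Y) (p : Y → ℝ) : ℝ :=
  ∑ r : Y ≃ Fin (Fintype.card Y),
    D r * (∑ z ∈ univ.filter (fun z => r z < r y), p z) ^ k

lemma gfail_diag (Y : Type) [Fintype Y] [DecidableEq Y]
    (D : (Y ≃ Fin (Fintype.card Y)) → ℝ) (hD0 : ∀ r, 0 ≤ D r) (hD1 : ∑ r, D r = 1)
    (k : ℕ) (q : Y → ℝ) (hq0 : ∀ y, 0 ≤ q y) (hq1 : ∑ y, q y = 1) :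
    ∑ y, q y * gfail Y D k y q ≤ 1 / ((k : ℝ) + 1) := by
  unfold gfail
  calc ∑ y, q y * ∑ r : Y ≃ Fin (Fintype.card Y),
        D r * (∑ z ∈ univ.filter (fun z => r z < r y), q z) ^ k
      = ∑ r : Y ≃ Fin (Fintype.card Y),
          D r * ∑ y, q y * (∑ z ∈ univ.filter (fun z => r z < r y), q z) ^ k := by
        rw [show (∑ y, q y * ∑ r : Y ≃ Fin (Fintype.card Y),
            D r * (∑ z ∈ univ.filter (fun z => r z < r y), q z) ^ k)
            = ∑ y, ∑ r : Y ≃ Fin (Fintype.card Y),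
              q y * (D r * (∑ z ∈ univ.filter (fun z => r z < r y), q z) ^ k)
          from sum_congr rfl fun y _ => Finset.mul_sum _ _ _, Finset.sum_comm]
        refine sum_congr rfl fun r _ => ?_
        rw [Finset.mul_sum]
        refine sum_congr rfl fun y _ => ?_
        ring
    _ ≤ ∑ r : Y ≃ Fin (Fintype.card Y), D r * (1 / ((k:ℝ) + 1)) := by
        refine sum_le_sum fun r _ => ?_
        exact mul_le_mul_of_nonneg_left (key_rank Y r k q hq0 hq1) (hD0 r)
    _ = 1 / ((k:ℝ) + 1) := by rw [← Finset.sum_mul, hD1, one_mul]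

lemma gfail_convex (Y : Type) [Fintype Y] [DecidableEq Y]
    (D : (Y ≃ Fin (Fintype.card Y)) → ℝ) (hD0 : ∀ r, 0 ≤ D r) (k : ℕ) (y : Y)
    (p1 p2 : Y → ℝ) (h1 : ∀ z, 0 ≤ p1 z) (h2 : ∀ z, 0 ≤ p2 z)
    (a b : ℝ) (ha : 0 ≤ a) (hb : 0 ≤ b) (hab : a + b = 1) :
    gfail Y D k y (a • p1 + b • p2)
      ≤ a * gfail Y D k y p1 + b * gfail Y D k y p2 := by
  unfold gfail
  rw [Finset.mul_sum, Finset.mul_sum, ← Finset.sum_add_distrib]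
  refine sum_le_sum fun r _ => ?_
  have hσ : ∑ z ∈ univ.filter (fun z => r z < r y), (a • p1 + b • p2) z
      = a * (∑ z ∈ univ.filter (fun z => r z < r y), p1 z)
        + b * (∑ z ∈ univ.filter (fun z => r z < r y), p2 z) := by
    rw [Finset.mul_sum, Finset.mul_sum, ← Finset.sum_add_distrib]
    refine sum_congr rfl fun z _ => ?_
    simp [smul_eq_mul]
  rw [hσ]
  have hs1 : (∑ z ∈ univ.filter (fun z => r z < r y), p1 z) ∈ Set.Ici (0:ℝ) :=
    sum_nonneg fun z _ => h1 z
  have hs2 : (∑ z ∈ univ.filter (fun z => r z < r y), p2 z) ∈ Set.Ici (0:ℝ) :=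
    sum_nonneg fun z _ => h2 z
  have hcx := (convexOn_pow (𝕜 := ℝ) k).2 hs1 hs2 ha hb hab
  simp only [smul_eq_mul] at hcx
  calc D r * (a * (∑ z ∈ univ.filter (fun z => r z < r y), p1 z)
        + b * (∑ z ∈ univ.filter (fun z => r z < r y), p2 z)) ^ k
      ≤ D r * (a * (∑ z ∈ univ.filter (fun z => r z < r y), p1 z) ^ k
        + b * (∑ z ∈ univ.filter (fun z => r z < r y), p2 z) ^ k) :=
        mul_le_mul_of_nonneg_left hcx (hD0 r)
    _ = a * (D r * (∑ z ∈ univ.filter (fun z => r z < r y), p1 z) ^ k)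
        + b * (D r * (∑ z ∈ univ.filter (fun z => r z < r y), p2 z) ^ k) := by ring

lemma gfail_continuous (Y : Type) [Fintype Y] [DecidableEq Y]
    (D : (Y ≃ Fin (Fintype.card Y)) → ℝ) (k : ℕ) (y : Y) :
    Continuous (gfail Y D k y) := by
  unfold gfail
  refine continuous_finset_sum _ fun r _ => ?_
  exact continuous_const.mul ((continuous_finset_sum _ fun z _ => continuous_apply z).pow k)

lemma exists_good (Y : Type) [Fintype Y] [DecidableEq Y] [Nonempty Y]
    (D : (Y ≃ Fin (Fintype.card Y)) → ℝ) (hD0 : ∀ r, 0 ≤ D r) (hD1 : ∑ r, D r = 1)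
    (k : ℕ) :
    ∃ p ∈ stdSimplex ℝ Y, ∀ y, gfail Y D k y p ≤ 1 / ((k : ℝ) + 1) := by
  by_contra hcon
  push_neg at hcon
  set c0 : ℝ := 1 / ((k : ℝ) + 1) with hc0
  -- the maximum failure over y, as a function of p
  have hne : (univ : Finset Y).Nonempty := univ_nonempty
  set M : (Y → ℝ) → ℝ := fun p => univ.sup' hne (fun y => gfail Y D k y p) with hM
  have hMcont : Continuous M :=
    Continuous.finset_sup'_apply hne fun y _ => gfail_continuous Y D k y
  have hSne : (stdSimplex ℝ Y).Nonempty := ⟨_, single_mem_stdSimplex ℝ (Classical.arbitrary Y)⟩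
  obtain ⟨pstar, hpstarS, hpstarmin⟩ :=
    (isCompact_stdSimplex ℝ Y).exists_isMinOn hSne hMcont.continuousOn
  -- the min-max value V is strictly above c0
  set V : ℝ := M pstar with hV
  have hVgt : c0 < V := by
    obtain ⟨y, hy⟩ := hcon pstar hpstarS
    exact lt_of_lt_of_le hy (Finset.le_sup' (fun y => gfail Y D k y pstar) (mem_univ y))
  set c' : ℝ := (c0 + V) / 2 with hc'
  have hc0c' : c0 < c' := by rw [hc']; linarith
  have hc'V : c' < V := by rw [hc']; linarith
  -- every p in the simplex has some y with gfail > c'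
  have hbig : ∀ p ∈ stdSimplex ℝ Y, ∃ y, c' < gfail Y D k y p := by
    intro p hp
    obtain ⟨y, _, hy⟩ := Finset.exists_mem_eq_sup' hne (fun y => gfail Y D k y p)
    exact ⟨y, lt_of_lt_of_le (lt_of_lt_of_le hc'V (hpstarmin hp)) (le_of_eq hy)⟩
  -- separation
  set C : Set (Y → ℝ) := {x | ∃ p ∈ stdSimplex ℝ Y, ∀ y, gfail Y D k y p ≤ x y} with hC
  set U : Set (Y → ℝ) := Set.univ.pi (fun _ : Y => Set.Iio c') with hU
  have hUopen : IsOpen U := isOpen_set_pi Set.finite_univ fun _ _ => isOpen_Iio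
  have hUconv : Convex ℝ U := convex_pi fun _ _ => convex_Iio c'
  have hCconv : Convex ℝ C := by
    rintro x1 ⟨p1, hp1, hx1⟩ x2 ⟨p2, hp2, hx2⟩ a b ha hb hab
    refine ⟨a • p1 + b • p2, (convex_stdSimplex ℝ Y) hp1 hp2 ha hb hab, fun y => ?_⟩
    calc gfail Y D k y (a • p1 + b • p2)
        ≤ a * gfail Y D k y p1 + b * gfail Y D k y p2 :=
          gfail_convex Y D hD0 k y p1 p2 hp1.1 hp2.1 a b ha hb hab
      _ ≤ a * x1 y + b * x2 y := by
          have := hx1 y; have := hx2 y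
          have h1 := mul_le_mul_of_nonneg_left (hx1 y) ha
          have h2 := mul_le_mul_of_nonneg_left (hx2 y) hb
          have : (a • x1 + b • x2) y = a * x1 y + b * x2 y := by
            simp [smul_eq_mul]
          linarith
      _ = (a • x1 + b • x2) y := by simp [smul_eq_mul]
  have hdisj : Disjoint U C := by
    rw [Set.disjoint_left]
    rintro x hxU ⟨p, hpS, hx⟩
    obtain ⟨y, hy⟩ := hbig p hpS
    have h1 : x y < c' := hxU y (Set.mem_univ y)
    have h2 := hx y
    linarith
  obtain ⟨f, u, hfU, hfC⟩ := geometric_hahn_banach_open hUconv hUopen hCconv hdisj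
  set a : Y → ℝ := fun y => f (Pi.single y (1:ℝ)) with haa
  have hf_eq : ∀ x : Y → ℝ, f x = ∑ y, x y * a y := by
    intro x
    conv_lhs => rw [pi_eq_sum_univ x]
    rw [map_sum]
    refine sum_congr rfl fun y _ => ?_
    rw [map_smul, smul_eq_mul]
    congr 2
    funext j
    simp [Pi.single_apply, eq_comm]
  -- the vector (gfail · p) is in C for p in the simplex
  have hgvec : ∀ p ∈ stdSimplex ℝ Y, (fun y => gfail Y D k y p) ∈ C :=
    fun p hp => ⟨p, hp, fun y => le_refl _⟩
  -- a is nonnegative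
  have ha0 : ∀ y, 0 ≤ a y := by
    intro y
    by_contra hay
    push_neg at hay
    set x0 : Y → ℝ := fun y => gfail Y D k y pstar with hx0
    have hx0C : x0 ∈ C := hgvec pstar hpstarS
    set t : ℝ := (f x0 + 1 - u) / (-(a y)) with ht
    have hstep : 0 ≤ t := by
      apply div_nonneg _ (by linarith)
      have := hfC x0 hx0C
      linarith
    have hmem : x0 + t • (Pi.single y (1:ℝ) : Y → ℝ) ∈ C := by
      obtain ⟨p, hpS, hx⟩ := hx0C
      refine ⟨p, hpS, fun y' => ?_⟩
      have : (0:ℝ) ≤ t * (Pi.single y (1:ℝ) : Y → ℝ) y' := by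
        apply mul_nonneg hstep
        by_cases h : y' = y <;> simp [Pi.single_apply, h]
      have hle := hx y'
      simp only [Pi.add_apply, Pi.smul_apply, smul_eq_mul]
      linarith
    have := hfC _ hmem
    rw [map_add, map_smul, smul_eq_mul] at this
    have hay' : a y ≠ 0 := ne_of_lt hay
    have hneg : (-a y) ≠ 0 := by simpa using hay'
    have heval : t * a y = -(f x0 + 1 - u) := by
      rw [ht]
      calc (f x0 + 1 - u) / -a y * a y
          = -((f x0 + 1 - u) / -a y * -a y) := by ring
        _ = -(f x0 + 1 - u) := by rw [div_mul_cancel₀ _ hneg]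
    have haq : a y = f (Pi.single y (1:ℝ)) := rfl
    rw [← haq, heval] at this
    linarith [hfC x0 hx0C]
  -- a is not identically zero
  have hasum : 0 < ∑ y, a y := by
    rcases lt_or_eq_of_le (sum_nonneg fun y _ => ha0 y) with h | h
    · exact h
    · exfalso
      have hall : ∀ y ∈ (univ : Finset Y), a y = 0 := by
        intro y hy
        have := (Finset.sum_eq_zero_iff_of_nonneg (fun y _ => ha0 y)).mp h.symm
        exact this y hy
      have hf0 : ∀ x : Y → ℝ, f x = 0 := by
        intro x
        rw [hf_eq]
        exact Finset.sum_eq_zero fun y hy => by rw [hall y hy, mul_zero]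
      have hx0C : (fun y => gfail Y D k y pstar) ∈ C := hgvec pstar hpstarS
      have h1 := hfC _ hx0C
      rw [hf0] at h1
      have h2 := hfU (fun _ => c0) (fun y _ => hc0c')
      rw [hf0] at h2
      linarith
  -- define q
  set q : Y → ℝ := fun y => a y / (∑ y', a y') with hq
  have hq0 : ∀ y, 0 ≤ q y := fun y => div_nonneg (ha0 y) (le_of_lt hasum)
  have hq1 : ∑ y, q y = 1 := by
    rw [hq, ← Finset.sum_div, div_self (ne_of_gt hasum)]
  have hqS : q ∈ stdSimplex ℝ Y := ⟨hq0, hq1⟩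
  -- lower bound: the separating functional on the gfail-vector of q
  have hlow : c0 * (∑ y, a y) < u := by
    have h2 := hfU (fun _ => c0) (fun y _ => hc0c')
    rw [hf_eq] at h2
    calc c0 * (∑ y, a y) = ∑ y, (fun _ : Y => c0) y * a y := by rw [Finset.mul_sum]
      _ < u := h2
  have hup : u ≤ ∑ y, gfail Y D k y q * a y := by
    have := hfC _ (hgvec q hqS)
    rwa [hf_eq] at this
  -- upper bound from the diagonal lemma
  have hdiag := gfail_diag Y D hD0 hD1 k q hq0 hq1
  have hrw : ∑ y, q y * gfail Y D k y q
      = (∑ y, gfail Y D k y q * a y) / (∑ y', a y') := by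
    rw [Finset.sum_div]
    refine sum_congr rfl fun y _ => ?_
    simp only [hq]
    ring
  rw [hrw, div_le_iff₀ hasum, ← hc0] at hdiag
  linarith

/-- Theorem 4.3, main theorem, for populations of rankings: optimal
U-alignment via a single-output policy.  `D` is a probability distribution over
linear orders on a finite nonempty `Y` (encoded as equivalences
`r : Y ≃ Fin (Fintype.card Y)`, where `y ≻ y'` iff `r y' < r y`).  For every `k ≥ 1`
there exists a probability distribution `p` on `Y` such that for every probability
distribution `q` on `Y`, drawing `r ~ D`, `y ~ q`, and `S = (v 1, …, v k)` i.i.d. from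
`p`, all independently, `Pr[max(S) ≽ y] ≥ k/(k+1)` (where `max(S) ≽ y` iff
`∃ i, r y ≤ r (v i)`). -/
theorem stmt_12 (Y : Type) [Fintype Y] [DecidableEq Y] [Nonempty Y]
    (D : (Y ≃ Fin (Fintype.card Y)) → ℝ)
    (hD0 : ∀ r, 0 ≤ D r) (hD1 : ∑ r, D r = 1)
    (k : ℕ) (hk : 1 ≤ k) :
    ∃ p : Y → ℝ, (∀ y, 0 ≤ p y) ∧ (∑ y, p y = 1) ∧
      ∀ q : Y → ℝ, (∀ y, 0 ≤ q y) → (∑ y, q y = 1) →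
        (∑ r : Y ≃ Fin (Fintype.card Y), ∑ y : Y, ∑ v : Fin k → Y,
            D r * q y * (∏ i, p (v i)) *
              (if ∃ i, r y ≤ r (v i) then (1 : ℝ) else 0))
          ≥ (k : ℝ) / ((k : ℝ) + 1) := by
  obtain ⟨p, hpS, hpg⟩ := exists_good Y D hD0 hD1 k
  have hp0 : ∀ y, 0 ≤ p y := hpS.1
  have hp1 : ∑ y, p y = 1 := hpS.2
  refine ⟨p, hp0, hp1, ?_⟩
  intro q hq0 hq1
  -- product expansion
  have hpow : ∀ w : Y → ℝ, ∑ v : Fin k → Y, ∏ i, w (v i) = (∑ z, w z) ^ k := by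
    intro w
    calc ∑ v : Fin k → Y, ∏ i, w (v i)
        = ∑ v ∈ Fintype.piFinset (fun _ : Fin k => (univ : Finset Y)), ∏ i, w (v i) := by
          rw [Fintype.piFinset_univ]
      _ = ∏ _i : Fin k, ∑ z, w z := (Finset.prod_univ_sum _ _).symm
      _ = (∑ z, w z) ^ k := by rw [Finset.prod_const, card_univ, Fintype.card_fin]
  -- inner identity for fixed r, y
  have hinner : ∀ (r : Y ≃ Fin (Fintype.card Y)) (y : Y),
      ∑ v : Fin k → Y, (∏ i, p (v i)) * (if ∃ i, r y ≤ r (v i) then (1:ℝ) else 0)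
        = 1 - (∑ z ∈ univ.filter (fun z => r z < r y), p z) ^ k := by
    intro r y
    have h1 : ∀ v : Fin k → Y, (if ∃ i, r y ≤ r (v i) then (1:ℝ) else 0)
        = 1 - ∏ i, (if r (v i) < r y then (1:ℝ) else 0) := by
      intro v
      rw [Finset.prod_boole]
      by_cases h : ∃ i, r y ≤ r (v i)
      · rw [if_pos h, if_neg]
        · norm_num
        · obtain ⟨i, hi⟩ := h
          exact fun hall => absurd (hall i (mem_univ i)) (not_lt.mpr hi)
      · rw [if_neg h, if_pos]
        · norm_num
        · push_neg at h
          exact fun i _ => h i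
    calc ∑ v : Fin k → Y, (∏ i, p (v i)) * (if ∃ i, r y ≤ r (v i) then (1:ℝ) else 0)
        = ∑ v : Fin k → Y, ((∏ i, p (v i))
            - ∏ i, (p (v i) * (if r (v i) < r y then (1:ℝ) else 0))) := by
          refine sum_congr rfl fun v _ => ?_
          rw [h1, mul_sub, mul_one, ← Finset.prod_mul_distrib]
      _ = (∑ v : Fin k → Y, ∏ i, p (v i))
            - ∑ v : Fin k → Y, ∏ i, (p (v i) * (if r (v i) < r y then (1:ℝ) else 0)) :=
          Finset.sum_sub_distrib _ _
      _ = 1 - (∑ z ∈ univ.filter (fun z => r z < r y), p z) ^ k := by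
          have h2 : ∑ v : Fin k → Y, ∏ i, (p (v i) * (if r (v i) < r y then (1:ℝ) else 0))
              = (∑ z, p z * (if r z < r y then (1:ℝ) else 0)) ^ k :=
            hpow (fun z => p z * if r z < r y then (1:ℝ) else 0)
          rw [hpow, h2, hp1, one_pow]
          congr 2
          rw [Finset.sum_filter]
          refine sum_congr rfl fun z _ => ?_
          by_cases h : r z < r y <;> simp [h]
  -- main computation
  have hmain : (∑ r : Y ≃ Fin (Fintype.card Y), ∑ y : Y, ∑ v : Fin k → Y,
        D r * q y * (∏ i, p (v i)) * (if ∃ i, r y ≤ r (v i) then (1 : ℝ) else 0))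
      = 1 - ∑ y, q y * gfail Y D k y p := by
    calc (∑ r : Y ≃ Fin (Fintype.card Y), ∑ y : Y, ∑ v : Fin k → Y,
          D r * q y * (∏ i, p (v i)) * (if ∃ i, r y ≤ r (v i) then (1 : ℝ) else 0))
        = ∑ r : Y ≃ Fin (Fintype.card Y), ∑ y : Y, (D r * q y) *
            (1 - (∑ z ∈ univ.filter (fun z => r z < r y), p z) ^ k) := by
          refine sum_congr rfl fun r _ => sum_congr rfl fun y _ => ?_
          rw [← hinner r y, Finset.mul_sum]
          refine sum_congr rfl fun v _ => by ring
      _ = ∑ y : Y, ∑ r : Y ≃ Fin (Fintype.card Y), (D r * q y) *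
            (1 - (∑ z ∈ univ.filter (fun z => r z < r y), p z) ^ k) := Finset.sum_comm
      _ = ∑ y : Y, q y * (1 - gfail Y D k y p) := by
          refine sum_congr rfl fun y _ => ?_
          unfold gfail
          have hstep : ∑ r : Y ≃ Fin (Fintype.card Y), (D r * q y) *
                (1 - (∑ z ∈ univ.filter (fun z => r z < r y), p z) ^ k)
              = ∑ r : Y ≃ Fin (Fintype.card Y), (q y * D r
                - q y * (D r * (∑ z ∈ univ.filter (fun z => r z < r y), p z) ^ k)) :=
            sum_congr rfl fun r _ => by ring
          rw [hstep, Finset.sum_sub_distrib, ← Finset.mul_sum, ← Finset.mul_sum, hD1]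
          ring
      _ = 1 - ∑ y, q y * gfail Y D k y p := by
          rw [show (∑ y : Y, q y * (1 - gfail Y D k y p))
              = ∑ y : Y, (q y - q y * gfail Y D k y p) from
            sum_congr rfl fun y _ => by ring, Finset.sum_sub_distrib, hq1]
  rw [ge_iff_le, hmain]
  have hbound : ∑ y, q y * gfail Y D k y p ≤ 1 / ((k:ℝ) + 1) := by
    calc ∑ y, q y * gfail Y D k y p
        ≤ ∑ y, q y * (1 / ((k:ℝ) + 1)) :=
          sum_le_sum fun y _ => mul_le_mul_of_nonneg_left (hpg y) (hq0 y)
      _ = 1 / ((k:ℝ) + 1) := by rw [← Finset.sum_mul, hq1, one_mul]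
  have hk1 : ((k:ℝ) + 1) ≠ 0 := by positivity
  have hfrac : (k:ℝ) / ((k:ℝ) + 1) = 1 - 1 / ((k:ℝ) + 1) := by field_simp; ring
  linarith
end

section
/- (Proposition 4.7: guarantee for no-regret self-play.) Let D be a probability distribution over linear orders on a finite nonempty set Y, let k ≥ 1 and T ≥ 1, and let p^1, …, p^T be probability distributions on Y. For a probability distribution q on Y and t ∈ {1,…,T} define u(q, t) := Pr_{≻~D, y~q, S~(p^t)^{⊗k}}[ y ≻ max(S) ], and define the regret Reg^T := max_{q} Σ_{t=1}^T u(q, t) − Σ_{t=1}^T u(p^t, t), where the maximum is over probability distributions q on Y. Let σ^T be the policy that samples t uniformly from {1,…,T} and then outputs a multiset drawn from (p^t)^{⊗k}. Then for every probability distribution q on Y, Pr_{S~σ^T, ≻~D, y~q}[ max(S) ≽ y ] ≥ k/(k+1) − Reg^T/T. -/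
open Finset

section Aux

variable {Y : Type} [Fintype Y] [DecidableEq Y]

lemma sumProdOne (k : ℕ) (p : Y → ℝ) (hp : ∑ y, p y = 1) :
    ∑ v : Fin k → Y, ∏ i, p (v i) = 1 := by
  rw [← Fintype.sum_pow, hp, one_pow]

lemma atMostOne (n : ℕ) (r : Y ≃ Fin (Fintype.card Y)) (w : Fin (n+1) → Y) :
    ∑ j : Fin (n+1), (if ∀ i, i ≠ j → r (w i) < r (w j) then (1:ℝ) else 0) ≤ 1 := by
  by_cases h : ∃ j, ∀ i, i ≠ j → r (w i) < r (w j)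
  · obtain ⟨j, hj⟩ := h
    have : ∀ j' : Fin (n+1), (if ∀ i, i ≠ j' → r (w i) < r (w j') then (1:ℝ) else 0)
        = if j' = j then 1 else 0 := by
      intro j'
      by_cases hjj : j' = j
      · subst hjj; rw [if_pos hj, if_pos rfl]
      · rw [if_neg hjj, if_neg]
        intro hj'
        exact absurd (lt_trans (hj' j (Ne.symm hjj)) (hj j' hjj)) (lt_irrefl _)
    simp [this]
  · push_neg at h
    apply le_of_eq ?_ |>.trans (zero_le_one)
    apply Finset.sum_eq_zero
    intro j _
    rw [if_neg]
    intro hc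
    obtain ⟨i, hi, hi2⟩ := h j
    exact absurd (hc i hi) (not_lt.mpr hi2)

lemma symmSum (n : ℕ) (r : Y ≃ Fin (Fintype.card Y)) (p : Y → ℝ) (j : Fin (n+1)) :
    ∑ w : Fin (n+1) → Y, (∏ i, p (w i)) *
        (if ∀ i, i ≠ (0 : Fin (n+1)) → r (w i) < r (w 0) then (1:ℝ) else 0)
      = ∑ w : Fin (n+1) → Y, (∏ i, p (w i)) *
        (if ∀ i, i ≠ j → r (w i) < r (w j) then (1:ℝ) else 0) := by
  set σ := Equiv.swap (0 : Fin (n+1)) j with hσ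
  apply Fintype.sum_equiv (σ.arrowCongr (Equiv.refl Y))
  intro w
  have h1 : ∀ i, (σ.arrowCongr (Equiv.refl Y) w) i = w (σ.symm i) := fun i => rfl
  have hprod : ∏ i, p ((σ.arrowCongr (Equiv.refl Y) w) i) = ∏ i, p (w i) := by
    simp only [h1]
    exact Equiv.prod_comp σ.symm (fun i => p (w i))
  rw [hprod]
  congr 1
  have hσj : σ.symm j = 0 := by simp [hσ]
  have hiff : (∀ i, i ≠ (0 : Fin (n+1)) → r (w i) < r (w 0))
      ↔ (∀ i, i ≠ j → r (w (σ.symm i)) < r (w (σ.symm j))) := by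
    rw [hσj]
    constructor
    · intro h i hij
      apply h (σ.symm i)
      intro hc
      exact hij (σ.symm.injective (hc.trans hσj.symm))
    · intro h i hi0
      have hij : σ i ≠ j := by
        intro hc
        apply hi0
        have : i = σ.symm j := by rw [← hc, Equiv.symm_apply_apply]
        rw [this, hσj]
      have := h (σ i) hij
      rwa [Equiv.symm_apply_apply] at this
  simp only [h1]
  rw [if_congr hiff rfl rfl]

lemma mainBound (n : ℕ) (r : Y ≃ Fin (Fintype.card Y)) (p : Y → ℝ)
    (hp0 : ∀ y, 0 ≤ p y) (hp1 : ∑ y, p y = 1) :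
    ∑ w : Fin (n+1) → Y, (∏ i, p (w i)) *
        (if ∀ i, i ≠ (0 : Fin (n+1)) → r (w i) < r (w 0) then (1:ℝ) else 0)
      ≤ 1 / ((n:ℝ) + 1) := by
  have key : ((n:ℝ) + 1) * (∑ w : Fin (n+1) → Y, (∏ i, p (w i)) *
      (if ∀ i, i ≠ (0 : Fin (n+1)) → r (w i) < r (w 0) then (1:ℝ) else 0)) ≤ 1 := by
    have : ((n:ℝ) + 1) * (∑ w : Fin (n+1) → Y, (∏ i, p (w i)) *
        (if ∀ i, i ≠ (0 : Fin (n+1)) → r (w i) < r (w 0) then (1:ℝ) else 0))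
        = ∑ j : Fin (n+1), ∑ w : Fin (n+1) → Y, (∏ i, p (w i)) *
          (if ∀ i, i ≠ j → r (w i) < r (w j) then (1:ℝ) else 0) := by
      rw [Finset.sum_congr rfl (fun j _ => (symmSum n r p j).symm), Finset.sum_const,
        Finset.card_univ, Fintype.card_fin, nsmul_eq_mul]
      push_cast
      ring
    rw [this, Finset.sum_comm]
    calc ∑ w : Fin (n+1) → Y, ∑ j : Fin (n+1), (∏ i, p (w i)) *
          (if ∀ i, i ≠ j → r (w i) < r (w j) then (1:ℝ) else 0)
        = ∑ w : Fin (n+1) → Y, (∏ i, p (w i)) * ∑ j : Fin (n+1),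
          (if ∀ i, i ≠ j → r (w i) < r (w j) then (1:ℝ) else 0) := by
          exact Finset.sum_congr rfl fun w _ => (Finset.mul_sum _ _ _).symm
      _ ≤ ∑ w : Fin (n+1) → Y, (∏ i, p (w i)) * 1 := by
          apply Finset.sum_le_sum
          intro w _
          exact mul_le_mul_of_nonneg_left (atMostOne n r w)
            (Finset.prod_nonneg fun i _ => hp0 _)
      _ = 1 := by simp [sumProdOne (n+1) p hp1]
  have hpos : (0:ℝ) < (n:ℝ) + 1 := by positivity
  rw [le_div_iff₀ hpos]
  linarith [key]

end Aux


/-- The per-round utility `u(q, t) = Pr_{r~D, y~q, S~(p^t)^{⊗k}}[ y ≻ max(S) ]`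
of the deviating player playing distribution `q` against `k` independent copies of
the self-play iterate `p^t`.  A linear order on `Y` is encoded as
`r : Y ≃ Fin (Fintype.card Y)` (`y ≻ y'` iff `r y' < r y`); `S = (v 1, …, v k)` are
`k` i.i.d. samples from `p^t`, and `y ≻ max(S)` iff `∀ i, r (v i) < r y`. -/
noncomputable def selfPlayU (Y : Type) [Fintype Y] [DecidableEq Y]
    (D : (Y ≃ Fin (Fintype.card Y)) → ℝ) (k T : ℕ) (ps : Fin T → Y → ℝ)
    (q : Y → ℝ) (t : Fin T) : ℝ :=
  ∑ r : Y ≃ Fin (Fintype.card Y), ∑ y : Y, ∑ v : Fin k → Y,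
    D r * q y * (∏ i, ps t (v i)) * (if ∀ i, r (v i) < r y then (1 : ℝ) else 0)

/-- The regret `Reg^T = max_q Σ_t u(q,t) − Σ_t u(p^t,t)`, the maximum (supremum) being
over probability distributions `q` on `Y`. -/
noncomputable def selfPlayReg (Y : Type) [Fintype Y] [DecidableEq Y]
    (D : (Y ≃ Fin (Fintype.card Y)) → ℝ) (k T : ℕ) (ps : Fin T → Y → ℝ) : ℝ :=
  sSup {x : ℝ | ∃ q : Y → ℝ, (∀ y, 0 ≤ q y) ∧ (∑ y, q y = 1) ∧
    x = (∑ t, selfPlayU Y D k T ps q t) - ∑ t, selfPlayU Y D k T ps (ps t) t}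

section Aux2

variable {Y : Type} [Fintype Y] [DecidableEq Y]
variable (D : (Y ≃ Fin (Fintype.card Y)) → ℝ) (k T : ℕ) (ps : Fin T → Y → ℝ)

-- rewrite the (y, v) double sum as a sum over Fin (k+1) → Y
lemma innerEq (r : Y ≃ Fin (Fintype.card Y)) (p : Y → ℝ) :
    ∑ y : Y, ∑ v : Fin k → Y,
        p y * (∏ i, p (v i)) * (if ∀ i, r (v i) < r y then (1:ℝ) else 0)
      = ∑ w : Fin (k+1) → Y, (∏ i, p (w i)) *
        (if ∀ i, i ≠ (0 : Fin (k+1)) → r (w i) < r (w 0) then (1:ℝ) else 0) := by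
  have h1 : (∑ y : Y, ∑ v : Fin k → Y,
        p y * (∏ i, p (v i)) * (if ∀ i, r (v i) < r y then (1:ℝ) else 0))
      = ∑ yv : Y × (Fin k → Y),
        p yv.1 * (∏ i, p (yv.2 i)) * (if ∀ i, r (yv.2 i) < r yv.1 then (1:ℝ) else 0) :=
    by exact (Fintype.sum_prod_type' (f := fun (y : Y) (v : Fin k → Y) =>
      p y * (∏ i, p (v i)) * (if ∀ i, r (v i) < r y then (1:ℝ) else 0))).symm
  rw [h1]
  apply Fintype.sum_equiv (Fin.consEquiv (fun _ : Fin (k+1) => Y))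
  rintro ⟨y, v⟩
  have e0 : Fin.consEquiv (fun _ : Fin (k+1) => Y) (y, v) = (Fin.cons y v : Fin (k+1) → Y) := rfl
  rw [e0]
  have hprod : (∏ i : Fin (k+1), p ((Fin.cons y v : Fin (k+1) → Y) i)) = p y * ∏ i, p (v i) := by
    rw [Fin.prod_univ_succ]
    simp
  rw [hprod]
  congr 1
  have hcond : (∀ i : Fin k, r (v i) < r y)
      ↔ (∀ i : Fin (k+1), i ≠ 0 → r ((Fin.cons y v : Fin (k+1) → Y) i) < r ((Fin.cons y v : Fin (k+1) → Y) 0)) := by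
    constructor
    · intro h i hi0
      induction i using Fin.cases with
      | zero => exact absurd rfl hi0
      | succ i => simpa using h i
    · intro h i
      have := h i.succ (Fin.succ_ne_zero i)
      simpa using this
  rw [if_congr hcond rfl rfl]

lemma selfPlayU_diag_le (hD0 : ∀ r, 0 ≤ D r) (hD1 : ∑ r, D r = 1)
    (t : Fin T) (hps0 : ∀ y, 0 ≤ ps t y) (hps1 : ∑ y, ps t y = 1) :
    selfPlayU Y D k T ps (ps t) t ≤ 1 / ((k:ℝ) + 1) := by
  unfold selfPlayU
  have step : ∀ r : Y ≃ Fin (Fintype.card Y),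
      ∑ y : Y, ∑ v : Fin k → Y, D r * ps t y * (∏ i, ps t (v i)) *
        (if ∀ i, r (v i) < r y then (1:ℝ) else 0)
      = D r * ∑ y : Y, ∑ v : Fin k → Y, ps t y * (∏ i, ps t (v i)) *
        (if ∀ i, r (v i) < r y then (1:ℝ) else 0) := by
    intro r
    rw [Finset.mul_sum]
    apply Finset.sum_congr rfl
    intro y _
    rw [Finset.mul_sum]
    apply Finset.sum_congr rfl
    intro v _
    ring
  calc ∑ r : Y ≃ Fin (Fintype.card Y), ∑ y : Y, ∑ v : Fin k → Y,
        D r * ps t y * (∏ i, ps t (v i)) * (if ∀ i, r (v i) < r y then (1:ℝ) else 0)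
      = ∑ r : Y ≃ Fin (Fintype.card Y), D r * ∑ y : Y, ∑ v : Fin k → Y,
        ps t y * (∏ i, ps t (v i)) * (if ∀ i, r (v i) < r y then (1:ℝ) else 0) :=
      Finset.sum_congr rfl fun r _ => step r
    _ ≤ ∑ r : Y ≃ Fin (Fintype.card Y), D r * (1 / ((k:ℝ) + 1)) := by
      apply Finset.sum_le_sum
      intro r _
      apply mul_le_mul_of_nonneg_left _ (hD0 r)
      rw [innerEq k r (ps t)]
      exact_mod_cast mainBound k r (ps t) hps0 hps1
    _ = 1 / ((k:ℝ) + 1) := by rw [← Finset.sum_mul, hD1, one_mul]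

lemma selfPlayU_nonneg (hD0 : ∀ r, 0 ≤ D r) (q : Y → ℝ) (hq0 : ∀ y, 0 ≤ q y)
    (t : Fin T) (hps0 : ∀ y, 0 ≤ ps t y) :
    0 ≤ selfPlayU Y D k T ps q t := by
  unfold selfPlayU
  apply Finset.sum_nonneg; intro r _
  apply Finset.sum_nonneg; intro y _
  apply Finset.sum_nonneg; intro v _
  apply mul_nonneg
  · exact mul_nonneg (mul_nonneg (hD0 r) (hq0 y)) (Finset.prod_nonneg fun i _ => hps0 _)
  · split <;> norm_num

lemma tripleSumOne (hD1 : ∑ r, D r = 1) (q : Y → ℝ) (hq1 : ∑ y, q y = 1)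
    (t : Fin T) (hps1 : ∑ y, ps t y = 1) :
    ∑ r : Y ≃ Fin (Fintype.card Y), ∑ y : Y, ∑ v : Fin k → Y,
      D r * q y * (∏ i, ps t (v i)) = 1 := by
  have h1 : ∀ (r : Y ≃ Fin (Fintype.card Y)) (y : Y),
      ∑ v : Fin k → Y, D r * q y * (∏ i, ps t (v i)) = D r * q y := by
    intro r y
    rw [← Finset.mul_sum, sumProdOne k (ps t) hps1, mul_one]
  simp only [h1]
  have h2 : ∀ r : Y ≃ Fin (Fintype.card Y), ∑ y : Y, D r * q y = D r := by
    intro r; rw [← Finset.mul_sum, hq1, mul_one]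
  simp only [h2, hD1]

lemma selfPlayU_le_one (hD0 : ∀ r, 0 ≤ D r) (hD1 : ∑ r, D r = 1)
    (q : Y → ℝ) (hq0 : ∀ y, 0 ≤ q y) (hq1 : ∑ y, q y = 1)
    (t : Fin T) (hps0 : ∀ y, 0 ≤ ps t y) (hps1 : ∑ y, ps t y = 1) :
    selfPlayU Y D k T ps q t ≤ 1 := by
  unfold selfPlayU
  apply le_of_le_of_eq _ (tripleSumOne D k T ps hD1 q hq1 t hps1)
  apply Finset.sum_le_sum; intro r _
  apply Finset.sum_le_sum; intro y _
  apply Finset.sum_le_sum; intro v _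
  have hn : 0 ≤ D r * q y * (∏ i, ps t (v i)) :=
    mul_nonneg (mul_nonneg (hD0 r) (hq0 y)) (Finset.prod_nonneg fun i _ => hps0 _)
  split
  · exact le_of_eq (mul_one _)
  · simpa using hn

end Aux2

/-- Proposition 4.7: guarantee for no-regret self-play.  `D` is a
probability distribution over linear orders on a finite nonempty `Y`, `k, T ≥ 1`, and
`p^1, …, p^T` are probability distributions on `Y`.  Let `σ^T` be the policy that
samples `t` uniformly from `{1,…,T}` and outputs `k` i.i.d. samples from `p^t`.
Then for every probability distribution `q` on `Y`,
`Pr_{S~σ^T, r~D, y~q}[ max(S) ≽ y ] ≥ k/(k+1) − Reg^T/T`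
(where `max(S) ≽ y` iff `∃ i, r y ≤ r (v i)`). -/
theorem stmt_16 (Y : Type) [Fintype Y] [DecidableEq Y] [Nonempty Y]
    (D : (Y ≃ Fin (Fintype.card Y)) → ℝ)
    (hD0 : ∀ r, 0 ≤ D r) (hD1 : ∑ r, D r = 1)
    (k T : ℕ) (hk : 1 ≤ k) (hT : 1 ≤ T)
    (ps : Fin T → Y → ℝ)
    (hps0 : ∀ t y, 0 ≤ ps t y) (hps1 : ∀ t, ∑ y, ps t y = 1) :
    ∀ q : Y → ℝ, (∀ y, 0 ≤ q y) → (∑ y, q y = 1) →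
      (1 / (T : ℝ)) * ∑ t : Fin T,
          ∑ r : Y ≃ Fin (Fintype.card Y), ∑ y : Y, ∑ v : Fin k → Y,
            D r * q y * (∏ i, ps t (v i)) *
              (if ∃ i, r y ≤ r (v i) then (1 : ℝ) else 0)
        ≥ (k : ℝ) / ((k : ℝ) + 1) - selfPlayReg Y D k T ps / (T : ℝ) := by
  intro q hq0 hq1
  have hT' : (0:ℝ) < (T : ℝ) := by exact_mod_cast Nat.lt_of_lt_of_le Nat.zero_lt_one hT
  have hk1 : (0:ℝ) < (k:ℝ) + 1 := by positivity
  -- complement identity for each round t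
  have hcompl : ∀ t : Fin T,
      (∑ r : Y ≃ Fin (Fintype.card Y), ∑ y : Y, ∑ v : Fin k → Y,
        D r * q y * (∏ i, ps t (v i)) * (if ∃ i, r y ≤ r (v i) then (1:ℝ) else 0))
      = 1 - selfPlayU Y D k T ps q t := by
    intro t
    unfold selfPlayU
    rw [eq_sub_iff_add_eq]
    calc (∑ r : Y ≃ Fin (Fintype.card Y), ∑ y : Y, ∑ v : Fin k → Y,
          D r * q y * (∏ i, ps t (v i)) * (if ∃ i, r y ≤ r (v i) then (1:ℝ) else 0))
        + (∑ r : Y ≃ Fin (Fintype.card Y), ∑ y : Y, ∑ v : Fin k → Y,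
          D r * q y * (∏ i, ps t (v i)) * (if ∀ i, r (v i) < r y then (1:ℝ) else 0))
        = ∑ r : Y ≃ Fin (Fintype.card Y), ∑ y : Y, ∑ v : Fin k → Y,
          D r * q y * (∏ i, ps t (v i)) := by
            rw [← Finset.sum_add_distrib]
            apply Finset.sum_congr rfl; intro r _
            rw [← Finset.sum_add_distrib]
            apply Finset.sum_congr rfl; intro y _
            rw [← Finset.sum_add_distrib]
            apply Finset.sum_congr rfl; intro v _
            by_cases h : ∀ i, r (v i) < r y
            · rw [if_pos h, if_neg]
              · ring
              · rintro ⟨i, hi⟩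
                exact absurd (h i) (not_lt.mpr hi)
            · push_neg at h
              obtain ⟨i, hi⟩ := h
              rw [if_pos ⟨i, hi⟩, if_neg]
              · ring
              · intro hc
                exact absurd (hc i) (not_lt.mpr hi)
      _ = 1 := tripleSumOne D k T ps hD1 q hq1 t (hps1 t)
  rw [Finset.sum_congr rfl (fun t _ => hcompl t), Finset.sum_sub_distrib,
    Finset.sum_const, Finset.card_univ, Fintype.card_fin, nsmul_eq_mul, mul_one]
  set Suq := ∑ t, selfPlayU Y D k T ps q t with hSuq
  set Sp := ∑ t, selfPlayU Y D k T ps (ps t) t with hSp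
  -- regret lower bound
  have hbdd : BddAbove {x : ℝ | ∃ q' : Y → ℝ, (∀ y, 0 ≤ q' y) ∧ (∑ y, q' y = 1) ∧
      x = (∑ t, selfPlayU Y D k T ps q' t) - ∑ t, selfPlayU Y D k T ps (ps t) t} := by
    refine ⟨(T : ℝ), ?_⟩
    rintro x ⟨q', hq'0, hq'1, rfl⟩
    have h1 : (∑ t, selfPlayU Y D k T ps q' t) ≤ (T : ℝ) := by
      calc (∑ t, selfPlayU Y D k T ps q' t) ≤ ∑ _t : Fin T, (1:ℝ) :=
          Finset.sum_le_sum fun t _ =>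
            selfPlayU_le_one D k T ps hD0 hD1 q' hq'0 hq'1 t (hps0 t) (hps1 t)
        _ = (T : ℝ) := by simp
    have h2 : (0:ℝ) ≤ ∑ t, selfPlayU Y D k T ps (ps t) t :=
      Finset.sum_nonneg fun t _ =>
        selfPlayU_nonneg D k T ps hD0 (ps t) (hps0 t) t (hps0 t)
    linarith
  have hkey : Suq - Sp ≤ selfPlayReg Y D k T ps :=
    le_csSup hbdd ⟨q, hq0, hq1, rfl⟩
  have hSple : Sp ≤ (T:ℝ) * (1 / ((k:ℝ) + 1)) := by
    calc Sp ≤ ∑ _t : Fin T, (1 / ((k:ℝ) + 1)) :=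
        Finset.sum_le_sum fun t _ =>
          selfPlayU_diag_le D k T ps hD0 hD1 t (hps0 t) (hps1 t)
      _ = (T:ℝ) * (1 / ((k:ℝ) + 1)) := by
        rw [Finset.sum_const, Finset.card_univ, Fintype.card_fin, nsmul_eq_mul]
  have e1 : (1/(T:ℝ)) * ((T:ℝ) - Suq) = 1 - Suq / (T:ℝ) := by
    field_simp
  have e2 : (Suq - Sp) / (T:ℝ) ≤ selfPlayReg Y D k T ps / (T:ℝ) := by gcongr
  have e3 : Sp / (T:ℝ) ≤ 1 / ((k:ℝ) + 1) := by
    rw [div_le_iff₀ hT']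
    calc Sp ≤ (T:ℝ) * (1 / ((k:ℝ) + 1)) := hSple
      _ = 1 / ((k:ℝ) + 1) * (T:ℝ) := by ring
  have e4 : (k:ℝ)/((k:ℝ)+1) + 1/((k:ℝ)+1) = 1 := by field_simp
  rw [ge_iff_le, e1]
  rw [sub_div] at e2
  linarith
end

section
/- (Theorem 4.10: robustness against ℓ-output opponents, for populations of rankings.) Let D be a probability distribution over linear orders on a finite nonempty set Y, let k ≥ 1 and 1 ≤ ℓ ≤ k+1, and let p be a probability distribution on Y satisfying the symmetric-equilibrium condition: for every probability distribution q on Y, Pr_{≻~D, y~q, S~p^{⊗k}}[ y ≻ max(S) ] ≤ Pr_{≻~D, y~p, S~p^{⊗k}}[ y ≻ max(S) ]. Then for every nonempty multiset S' over Y of size ℓ, Pr_{≻~D, S~p^{⊗k}}[ max(S) ≽ max(S') ] ≥ (k+1−ℓ)/(k+1); consequently the same bound holds against every probability distribution over size-ℓ multisets of Y. -/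
open Finset


lemma aux_one_max {Y : Type} [Fintype Y] [DecidableEq Y] {n m : ℕ}
    (r : Y ≃ Fin n) (w : Fin m → Y) :
    ∑ j : Fin m, (if ∀ i, i ≠ j → r (w i) < r (w j) then (1:ℝ) else 0) ≤ 1 := by
  rw [Finset.sum_boole]
  have h : (Finset.univ.filter (fun j => ∀ i, i ≠ j → r (w i) < r (w j))).card ≤ 1 := by
    rw [Finset.card_le_one]
    intro a ha b hb
    simp only [Finset.mem_filter] at ha hb
    by_contra hab
    exact absurd (ha.2 b (Ne.symm hab)) (not_lt.2 (le_of_lt (hb.2 a hab)))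
  exact_mod_cast h

lemma aux_exchange {Y : Type} [Fintype Y] [DecidableEq Y] {n m : ℕ}
    (r : Y ≃ Fin n) (p : Y → ℝ) (j : Fin (m+1)) :
    ∑ w : Fin (m+1) → Y, (∏ i, p (w i)) *
        (if ∀ i, i ≠ j → r (w i) < r (w j) then (1:ℝ) else 0)
      = ∑ w : Fin (m+1) → Y, (∏ i, p (w i)) *
        (if ∀ i, i ≠ 0 → r (w i) < r (w 0) then (1:ℝ) else 0) := by
  set σ : Equiv.Perm (Fin (m+1)) := Equiv.swap 0 j with hσ
  have hσσ : ∀ i, σ (σ i) = i := fun i => Equiv.swap_apply_self 0 j i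
  have hσ0 : σ 0 = j := Equiv.swap_apply_left 0 j
  have hσj : σ j = 0 := Equiv.swap_apply_right 0 j
  refine Fintype.sum_bijective (fun w => w ∘ σ) ?_ _ _ ?_
  · exact Function.Involutive.bijective (fun w => by
      funext i; simp [Function.comp, hσσ i])
  · intro w
    have hprod : (∏ i, p (w i)) = ∏ i, p (w (σ i)) := (Equiv.prod_comp σ fun i => p (w i)).symm
    have hcond : (∀ i, i ≠ j → r (w i) < r (w j)) ↔
        (∀ i, i ≠ 0 → r ((w ∘ σ) i) < r ((w ∘ σ) 0)) := by
      constructor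
      · intro h i hi
        simp only [Function.comp, hσ0]
        refine h (σ i) (fun hc => hi ?_)
        have := congrArg σ hc
        rwa [hσσ, hσj] at this
      · intro h i hi
        have := h (σ i) (fun hc => hi (by
          have := congrArg σ hc
          rwa [hσσ, hσ0] at this))
        simpa only [Function.comp, hσσ, hσ0] using this
    rw [hprod]
    simp only [Function.comp] at hcond ⊢
    rw [if_congr hcond rfl rfl]

lemma aux_sum_prod {Y : Type} [Fintype Y] [DecidableEq Y] {m : ℕ}
    (p : Y → ℝ) (hp1 : ∑ y, p y = 1) :
    ∑ w : Fin m → Y, ∏ i, p (w i) = 1 := by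
  have := Finset.prod_univ_sum (fun _ : Fin m => (Finset.univ : Finset Y)) (fun _ y => p y)
  rw [Fintype.piFinset_univ] at this
  rw [← this]
  simp [hp1]

lemma aux_X_le {Y : Type} [Fintype Y] [DecidableEq Y] {n m : ℕ}
    (r : Y ≃ Fin n) (p : Y → ℝ) (hp0 : ∀ y, 0 ≤ p y) (hp1 : ∑ y, p y = 1) :
    ∑ w : Fin (m+1) → Y, (∏ i, p (w i)) *
        (if ∀ i, i ≠ 0 → r (w i) < r (w 0) then (1:ℝ) else 0) ≤ 1 / (m+1) := by
  set X := ∑ w : Fin (m+1) → Y, (∏ i, p (w i)) *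
        (if ∀ i, i ≠ 0 → r (w i) < r (w 0) then (1:ℝ) else 0) with hX
  have hprodnn : ∀ w : Fin (m+1) → Y, 0 ≤ ∏ i, p (w i) := fun w =>
    Finset.prod_nonneg (fun i _ => hp0 _)
  have h1 : ((m:ℝ)+1) * X = ∑ j : Fin (m+1), ∑ w : Fin (m+1) → Y, (∏ i, p (w i)) *
      (if ∀ i, i ≠ j → r (w i) < r (w j) then (1:ℝ) else 0) := by
    rw [Finset.sum_congr rfl (fun j _ => aux_exchange r p j), ← hX, Finset.sum_const,
      Finset.card_univ, Fintype.card_fin, nsmul_eq_mul]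
    push_cast
    ring
  have h2 : ∑ j : Fin (m+1), ∑ w : Fin (m+1) → Y, (∏ i, p (w i)) *
      (if ∀ i, i ≠ j → r (w i) < r (w j) then (1:ℝ) else 0) ≤ 1 := by
    rw [Finset.sum_comm]
    calc ∑ w : Fin (m+1) → Y, ∑ j : Fin (m+1), (∏ i, p (w i)) *
          (if ∀ i, i ≠ j → r (w i) < r (w j) then (1:ℝ) else 0)
        ≤ ∑ w : Fin (m+1) → Y, ∏ i, p (w i) := by
          refine Finset.sum_le_sum (fun w _ => ?_)
          rw [← Finset.mul_sum]
          calc (∏ i, p (w i)) * ∑ j : Fin (m+1),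
                (if ∀ i, i ≠ j → r (w i) < r (w j) then (1:ℝ) else 0)
              ≤ (∏ i, p (w i)) * 1 :=
                mul_le_mul_of_nonneg_left (aux_one_max r w) (hprodnn w)
            _ = ∏ i, p (w i) := mul_one _
      _ = 1 := aux_sum_prod p hp1
  have hm : (0:ℝ) < (m:ℝ) + 1 := by positivity
  rw [le_div_iff₀ hm]
  nlinarith [h1, h2]

lemma aux_cons {Y : Type} [Fintype Y] [DecidableEq Y] {n m : ℕ}
    (r : Y ≃ Fin n) (p : Y → ℝ) :
    ∑ y : Y, ∑ v : Fin m → Y, p y * (∏ i, p (v i)) *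
        (if ∀ i, r (v i) < r y then (1:ℝ) else 0)
      = ∑ w : Fin (m+1) → Y, (∏ i, p (w i)) *
        (if ∀ i, i ≠ 0 → r (w i) < r (w 0) then (1:ℝ) else 0) := by
  have hpt := Fintype.sum_prod_type (f := fun x : Y × (Fin m → Y) =>
    p x.1 * (∏ i, p (x.2 i)) * (if ∀ i, r (x.2 i) < r x.1 then (1:ℝ) else 0))
  rw [← hpt]
  refine (Fintype.sum_equiv (Fin.consEquiv (fun _ : Fin (m+1) => Y)).symm _ _ (fun w => ?_)).symm
  have hcond : (∀ i : Fin (m+1), i ≠ 0 → r (w i) < r (w 0)) ↔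
      (∀ i : Fin m, r (w i.succ) < r (w 0)) := by
    constructor
    · intro h i; exact h i.succ (Fin.succ_ne_zero i)
    · intro h i hi
      obtain ⟨j, rfl⟩ := Fin.eq_succ_of_ne_zero hi
      exact h j
  have happ : (Fin.consEquiv (fun _ : Fin (m+1) => Y)).symm w = (w 0, fun i => w i.succ) := rfl
  rw [happ, Fin.prod_univ_succ]
  rw [if_congr hcond rfl rfl]


/-- Theorem 4.10: robustness against ℓ-output opponents, for populations
of rankings.  `D` is a probability distribution over linear orders on a finite
nonempty `Y` (encoded as equivalences `r : Y ≃ Fin (Fintype.card Y)`, `y ≻ y'` iff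
`r y' < r y`), `k ≥ 1`, `1 ≤ ℓ ≤ k+1`, and `p` is a probability distribution on `Y`
satisfying the symmetric-equilibrium condition: for every probability distribution `q`
on `Y`, `Pr_{r~D, y~q, S~p^{⊗k}}[y ≻ max(S)] ≤ Pr_{r~D, y~p, S~p^{⊗k}}[y ≻ max(S)]`
(with `S = (v 1, …, v k)` i.i.d. from `p`, and `y ≻ max(S)` iff `∀ i, r (v i) < r y`).
Then: (1) for every nonempty multiset `S'` over `Y` of size `ℓ`,
`Pr_{r~D, S~p^{⊗k}}[max(S) ≽ max(S')] ≥ (k+1−ℓ)/(k+1)` (where `max(S) ≽ max(S')` iff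
`∃ i`, the rank of `v i` is at least the sup of the ranks of `S'`); and
(2) consequently the same bound holds against every probability distribution over
size-`ℓ` multisets of `Y` (elements of `Sym Y ℓ`). -/
theorem stmt_17 (Y : Type) [Fintype Y] [DecidableEq Y] [Nonempty Y]
    (D : (Y ≃ Fin (Fintype.card Y)) → ℝ)
    (hD0 : ∀ r, 0 ≤ D r) (hD1 : ∑ r, D r = 1)
    (k ℓ : ℕ) (hk : 1 ≤ k) (hℓ1 : 1 ≤ ℓ) (hℓ2 : ℓ ≤ k + 1)
    (p : Y → ℝ) (hp0 : ∀ y, 0 ≤ p y) (hp1 : ∑ y, p y = 1)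
    (heq : ∀ q : Y → ℝ, (∀ y, 0 ≤ q y) → (∑ y, q y = 1) →
      (∑ r : Y ≃ Fin (Fintype.card Y), ∑ y : Y, ∑ v : Fin k → Y,
          D r * q y * (∏ i, p (v i)) *
            (if ∀ i, r (v i) < r y then (1 : ℝ) else 0))
        ≤ ∑ r : Y ≃ Fin (Fintype.card Y), ∑ y : Y, ∑ v : Fin k → Y,
            D r * p y * (∏ i, p (v i)) *
              (if ∀ i, r (v i) < r y then (1 : ℝ) else 0)) :
    (∀ S' : Multiset Y, S' ≠ 0 → Multiset.card S' = ℓ →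
      (∑ r : Y ≃ Fin (Fintype.card Y), ∑ v : Fin k → Y,
          D r * (∏ i, p (v i)) *
            (if ∃ i, (S'.map fun z => (r z).val).sup ≤ (r (v i)).val
             then (1 : ℝ) else 0))
        ≥ ((k : ℝ) + 1 - (ℓ : ℝ)) / ((k : ℝ) + 1))
    ∧ (∀ π : Sym Y ℓ → ℝ, (∀ S', 0 ≤ π S') → (∑ S', π S' = 1) →
      (∑ S' : Sym Y ℓ, ∑ r : Y ≃ Fin (Fintype.card Y), ∑ v : Fin k → Y,
          π S' * D r * (∏ i, p (v i)) *
            (if ∃ i, (((S' : Multiset Y)).map fun z => (r z).val).sup ≤ (r (v i)).val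
             then (1 : ℝ) else 0))
        ≥ ((k : ℝ) + 1 - (ℓ : ℝ)) / ((k : ℝ) + 1)) := by
  obtain ⟨m, rfl⟩ : ∃ m, k = m + 1 := ⟨k - 1, (Nat.succ_pred_eq_of_pos hk).symm⟩
  set k := m + 1 with hkdef
  -- Step 1: the value W of the symmetric equilibrium is at most 1/(k+1).
  have hW : (∑ r : Y ≃ Fin (Fintype.card Y), ∑ y : Y, ∑ v : Fin k → Y,
      D r * p y * (∏ i, p (v i)) *
        (if ∀ i, r (v i) < r y then (1 : ℝ) else 0)) ≤ 1 / ((k:ℝ) + 1) := by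
    have hcong : ∀ r : Y ≃ Fin (Fintype.card Y),
        (∑ y : Y, ∑ v : Fin k → Y, D r * p y * (∏ i, p (v i)) *
          (if ∀ i, r (v i) < r y then (1 : ℝ) else 0))
        = D r * ∑ w : Fin (k+1) → Y, (∏ i, p (w i)) *
            (if ∀ i, i ≠ 0 → r (w i) < r (w 0) then (1:ℝ) else 0) := by
      intro r
      rw [← aux_cons r p, Finset.mul_sum]
      refine Finset.sum_congr rfl (fun y _ => ?_)
      rw [Finset.mul_sum]
      refine Finset.sum_congr rfl (fun v _ => ?_)
      ring
    rw [Finset.sum_congr rfl (fun r _ => hcong r)]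
    calc (∑ r : Y ≃ Fin (Fintype.card Y), D r * ∑ w : Fin (k+1) → Y, (∏ i, p (w i)) *
          (if ∀ i, i ≠ 0 → r (w i) < r (w 0) then (1:ℝ) else 0))
        ≤ ∑ r : Y ≃ Fin (Fintype.card Y), D r * (1 / ((k:ℝ)+1)) := by
          refine Finset.sum_le_sum (fun r _ => ?_)
          have := aux_X_le (m := k) r p hp0 hp1
          push_cast at this ⊢
          exact mul_le_mul_of_nonneg_left this (hD0 r)
      _ = 1 / ((k:ℝ)+1) := by rw [← Finset.sum_mul, hD1, one_mul]
  -- Step 2: for each fixed y0, the probability that y0 strictly beats the sample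
  -- is at most 1/(k+1).
  have hA : ∀ y0 : Y,
      (∑ r : Y ≃ Fin (Fintype.card Y), ∑ v : Fin k → Y,
        D r * (∏ i, p (v i)) * (if ∀ i, r (v i) < r y0 then (1 : ℝ) else 0))
      ≤ 1 / ((k:ℝ) + 1) := by
    intro y0
    have hq0 : ∀ y : Y, 0 ≤ (if y = y0 then (1:ℝ) else 0) := by
      intro y; split_ifs <;> norm_num
    have hq1 : ∑ y : Y, (if y = y0 then (1:ℝ) else 0) = 1 := by
      simp [Finset.sum_ite_eq']
    have h := heq _ hq0 hq1
    refine le_trans (le_of_eq ?_) (h.trans hW)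
    refine Finset.sum_congr rfl (fun r _ => ?_)
    rw [Finset.sum_comm]
    refine Finset.sum_congr rfl (fun v _ => ?_)
    rw [Finset.sum_eq_single y0]
    · simp
    · intro y _ hy
      simp [hy]
    · simp
  -- Part 1
  have part1 : ∀ S' : Multiset Y, S' ≠ 0 → Multiset.card S' = ℓ →
      (∑ r : Y ≃ Fin (Fintype.card Y), ∑ v : Fin k → Y,
          D r * (∏ i, p (v i)) *
            (if ∃ i, (S'.map fun z => (r z).val).sup ≤ (r (v i)).val
             then (1 : ℝ) else 0))
        ≥ ((k : ℝ) + 1 - (ℓ : ℝ)) / ((k : ℝ) + 1) := by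
    intro S' hS0 hScard
    have htFne : S'.toFinset.Nonempty := by
      obtain ⟨z, hz⟩ := Multiset.exists_mem_of_ne_zero hS0
      exact ⟨z, Multiset.mem_toFinset.2 hz⟩
    -- sup over the multiset equals sup over the toFinset
    have hsup_eq : ∀ r : Y ≃ Fin (Fintype.card Y),
        (S'.map fun z => (r z).val).sup = S'.toFinset.sup (fun z => (r z).val) := by
      intro r
      apply le_antisymm
      · rw [Multiset.sup_le]
        intro b hb
        obtain ⟨a, ha, rfl⟩ := Multiset.mem_map.1 hb
        exact Finset.le_sup (f := fun z => ((r z).val)) (Multiset.mem_toFinset.2 ha)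
      · rw [Finset.sup_le_iff]
        intro a ha
        exact Multiset.le_sup (Multiset.mem_map_of_mem _ (Multiset.mem_toFinset.1 ha))
    -- pointwise bound on the complement indicator
    have hpoint : ∀ (r : Y ≃ Fin (Fintype.card Y)) (v : Fin k → Y),
        (if ∀ i, ((r (v i)).val) < (S'.map fun z => (r z).val).sup then (1:ℝ) else 0)
          ≤ ∑ z ∈ S'.toFinset, (if ∀ i, r (v i) < r z then (1:ℝ) else 0) := by
      intro r v
      split_ifs with h
      · obtain ⟨z, hz, hzsup⟩ := Finset.exists_mem_eq_sup S'.toFinset htFne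
          (fun z => (r z).val)
        have hz1 : (if ∀ i, r (v i) < r z then (1:ℝ) else 0) = 1 := by
          rw [if_pos]
          intro i
          have := h i
          rw [hsup_eq r, hzsup] at this
          exact this
        calc (1:ℝ) = (if ∀ i, r (v i) < r z then (1:ℝ) else 0) := hz1.symm
          _ ≤ ∑ z ∈ S'.toFinset, (if ∀ i, r (v i) < r z then (1:ℝ) else 0) := by
            refine Finset.single_le_sum
              (f := fun z => (if ∀ i, r (v i) < r z then (1:ℝ) else 0))
              (fun z _ => by split_ifs <;> norm_num) hz
      · refine Finset.sum_nonneg (fun z _ => ?_)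
        split_ifs <;> norm_num
    have hPnn : ∀ (r : Y ≃ Fin (Fintype.card Y)) (v : Fin k → Y),
        0 ≤ D r * ∏ i, p (v i) :=
      fun r v => mul_nonneg (hD0 r) (Finset.prod_nonneg (fun i _ => hp0 _))
    -- the complement mass B
    set B := ∑ r : Y ≃ Fin (Fintype.card Y), ∑ v : Fin k → Y,
        D r * (∏ i, p (v i)) *
          (if ∀ i, ((r (v i)).val) < (S'.map fun z => (r z).val).sup then (1:ℝ) else 0)
      with hB
    have hBle : B ≤ (ℓ:ℝ) / ((k:ℝ)+1) := by
      have step1 : B ≤ ∑ z ∈ S'.toFinset, ∑ r : Y ≃ Fin (Fintype.card Y),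
          ∑ v : Fin k → Y, D r * (∏ i, p (v i)) *
            (if ∀ i, r (v i) < r z then (1:ℝ) else 0) := by
        rw [hB]
        calc (∑ r : Y ≃ Fin (Fintype.card Y), ∑ v : Fin k → Y,
              D r * (∏ i, p (v i)) *
                (if ∀ i, ((r (v i)).val) < (S'.map fun z => (r z).val).sup then (1:ℝ) else 0))
            ≤ ∑ r : Y ≃ Fin (Fintype.card Y), ∑ v : Fin k → Y,
              ∑ z ∈ S'.toFinset, D r * (∏ i, p (v i)) *
                (if ∀ i, r (v i) < r z then (1:ℝ) else 0) := by
              refine Finset.sum_le_sum (fun r _ => Finset.sum_le_sum (fun v _ => ?_))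
              rw [← Finset.mul_sum]
              exact mul_le_mul_of_nonneg_left (hpoint r v) (hPnn r v)
          _ = ∑ z ∈ S'.toFinset, ∑ r : Y ≃ Fin (Fintype.card Y),
              ∑ v : Fin k → Y, D r * (∏ i, p (v i)) *
                (if ∀ i, r (v i) < r z then (1:ℝ) else 0) := by
              have hsw : ∀ r : Y ≃ Fin (Fintype.card Y),
                  (∑ v : Fin k → Y, ∑ z ∈ S'.toFinset, D r * (∏ i, p (v i)) *
                    (if ∀ i, r (v i) < r z then (1:ℝ) else 0))
                  = ∑ z ∈ S'.toFinset, ∑ v : Fin k → Y, D r * (∏ i, p (v i)) *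
                    (if ∀ i, r (v i) < r z then (1:ℝ) else 0) :=
                fun r => Finset.sum_comm
              rw [Finset.sum_congr rfl (fun r _ => hsw r), Finset.sum_comm]
      have step2 : (∑ z ∈ S'.toFinset, ∑ r : Y ≃ Fin (Fintype.card Y),
          ∑ v : Fin k → Y, D r * (∏ i, p (v i)) *
            (if ∀ i, r (v i) < r z then (1:ℝ) else 0))
          ≤ (S'.toFinset.card : ℝ) * (1 / ((k:ℝ)+1)) := by
        calc (∑ z ∈ S'.toFinset, ∑ r : Y ≃ Fin (Fintype.card Y),
            ∑ v : Fin k → Y, D r * (∏ i, p (v i)) *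
              (if ∀ i, r (v i) < r z then (1:ℝ) else 0))
            ≤ ∑ _z ∈ S'.toFinset, 1 / ((k:ℝ)+1) :=
              Finset.sum_le_sum (fun z _ => hA z)
          _ = (S'.toFinset.card : ℝ) * (1 / ((k:ℝ)+1)) := by
              rw [Finset.sum_const, nsmul_eq_mul]
      have hcard : (S'.toFinset.card : ℝ) ≤ (ℓ:ℝ) := by
        have := Multiset.toFinset_card_le S'
        rw [hScard] at this
        exact_mod_cast this
      have hkpos : (0:ℝ) < (k:ℝ)+1 := by positivity
      calc B ≤ (S'.toFinset.card : ℝ) * (1 / ((k:ℝ)+1)) := step1.trans step2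
        _ ≤ (ℓ:ℝ) * (1 / ((k:ℝ)+1)) := by
            refine mul_le_mul_of_nonneg_right hcard (by positivity)
        _ = (ℓ:ℝ) / ((k:ℝ)+1) := by ring
    -- the target equals 1 - B
    have hsplit : (∑ r : Y ≃ Fin (Fintype.card Y), ∑ v : Fin k → Y,
        D r * (∏ i, p (v i)) *
          (if ∃ i, (S'.map fun z => (r z).val).sup ≤ (r (v i)).val
           then (1 : ℝ) else 0)) = 1 - B := by
      have hone : (∑ r : Y ≃ Fin (Fintype.card Y), ∑ v : Fin k → Y,
          D r * (∏ i, p (v i))) = 1 := by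
        have : ∀ r : Y ≃ Fin (Fintype.card Y),
            (∑ v : Fin k → Y, D r * (∏ i, p (v i))) = D r := by
          intro r
          rw [← Finset.mul_sum, aux_sum_prod p hp1, mul_one]
        rw [Finset.sum_congr rfl (fun r _ => this r), hD1]
      have hsplit' : (∑ r : Y ≃ Fin (Fintype.card Y), ∑ v : Fin k → Y,
          D r * (∏ i, p (v i)) *
            (if ∃ i, (S'.map fun z => (r z).val).sup ≤ (r (v i)).val
             then (1 : ℝ) else 0))
          = (∑ r : Y ≃ Fin (Fintype.card Y), ∑ v : Fin k → Y,
              D r * (∏ i, p (v i))) - B := by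
        rw [hB, ← Finset.sum_sub_distrib]
        refine Finset.sum_congr rfl (fun r _ => ?_)
        rw [← Finset.sum_sub_distrib]
        refine Finset.sum_congr rfl (fun v _ => ?_)
        have hiff : (∃ i, (S'.map fun z => (r z).val).sup ≤ (r (v i)).val)
          ↔ ¬ (∀ i, ((r (v i)).val) < (S'.map fun z => (r z).val).sup) := by
          push_neg
          simp only [not_lt]
        by_cases hc : ∀ i, ((r (v i)).val) < (S'.map fun z => (r z).val).sup
        · rw [if_pos hc, if_neg (fun hex => (hiff.1 hex) hc)]
          ring
        · rw [if_neg hc, if_pos (hiff.2 hc)]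
          ring
      rw [hsplit', hone]
    rw [ge_iff_le, hsplit]
    have hkpos : (0:ℝ) < (k:ℝ)+1 := by positivity
    rw [div_le_iff₀ hkpos]
    have : (ℓ:ℝ) / ((k:ℝ)+1) * ((k:ℝ)+1) = (ℓ:ℝ) := by field_simp
    nlinarith [hBle]
  refine ⟨part1, ?_⟩
  -- Part 2
  intro π hπ0 hπ1
  have hinner : ∀ S' : Sym Y ℓ,
      (∑ r : Y ≃ Fin (Fintype.card Y), ∑ v : Fin k → Y,
        π S' * D r * (∏ i, p (v i)) *
          (if ∃ i, (((S' : Multiset Y)).map fun z => (r z).val).sup ≤ (r (v i)).val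
           then (1 : ℝ) else 0))
      = π S' * ∑ r : Y ≃ Fin (Fintype.card Y), ∑ v : Fin k → Y,
          D r * (∏ i, p (v i)) *
            (if ∃ i, (((S' : Multiset Y)).map fun z => (r z).val).sup ≤ (r (v i)).val
             then (1 : ℝ) else 0) := by
    intro S'
    rw [Finset.mul_sum]
    refine Finset.sum_congr rfl (fun r _ => ?_)
    rw [Finset.mul_sum]
    refine Finset.sum_congr rfl (fun v _ => ?_)
    ring
  rw [ge_iff_le, Finset.sum_congr rfl (fun S' _ => hinner S')]
  calc ((k : ℝ) + 1 - (ℓ : ℝ)) / ((k : ℝ) + 1)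
      = ∑ S' : Sym Y ℓ, π S' * (((k : ℝ) + 1 - (ℓ : ℝ)) / ((k : ℝ) + 1)) := by
        rw [← Finset.sum_mul, hπ1, one_mul]
    _ ≤ ∑ S' : Sym Y ℓ, π S' * (∑ r : Y ≃ Fin (Fintype.card Y), ∑ v : Fin k → Y,
          D r * (∏ i, p (v i)) *
            (if ∃ i, (((S' : Multiset Y)).map fun z => (r z).val).sup ≤ (r (v i)).val
             then (1 : ℝ) else 0)) := by
        refine Finset.sum_le_sum (fun S' _ => ?_)
        refine mul_le_mul_of_nonneg_left ?_ (hπ0 S')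
        have hne : (S' : Multiset Y) ≠ 0 := by
          intro hc
          have h2 : Multiset.card (S' : Multiset Y) = ℓ := S'.2
          rw [hc, Multiset.card_zero] at h2
          omega
        exact part1 (S' : Multiset Y) hne S'.2
end
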